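/- arXiv:2103.17166 — 12 statements merged into one kernel-verified Lean document; each statement's English description precedes it below -/
import Mathlib

section
/- There is a bijection f : ω² → ω³ such that f⁻¹[A] ∈ Fin⊗Fin for every A ∈ BI; that is, Fin² contains an isomorphic copy of BI (BI ⊑ Fin²). -/
open Set

/-- The ideal `Fin ⊗ Fin` on `ω²`: sets all but finitely many of whose
vertical sections are finite. -/
def FinFin : Set (Set (ℕ × ℕ)) :=
  {A | {n : ℕ | ¬ ({m : ℕ | (n, m) ∈ A}).Finite}.Finite}

/-- The `i`-th section of a subset of `ω³`. -/
def BIsec (i : ℕ) (A : Set (ℕ × ℕ × ℕ)) : Set (ℕ × ℕ) := {p | (i, p) ∈ A}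

/-- The ideal `BI` on `ω³`. -/
def BI : Set (Set (ℕ × ℕ × ℕ)) :=
  {A | ∃ k : ℕ, (∀ i < k, BIsec i A ∈ FinFin) ∧ ∀ i ≥ k, (BIsec i A).Finite}

/-- `I` is an ideal on `X`: contains all finite sets, closed under subsets and
finite unions, and proper. -/
def IsIdeal {X : Type*} (I : Set (Set X)) : Prop :=
  (∀ A : Set X, A.Finite → A ∈ I) ∧
  (∀ A B : Set X, A ∈ I → B ⊆ A → B ∈ I) ∧
  (∀ A B : Set X, A ∈ I → B ∈ I → A ∪ B ∈ I) ∧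
  (Set.univ : Set X) ∉ I

/-- `Fin²` contains an isomorphic copy of `BI`. -/
theorem stmt_2 : ∃ f : ℕ × ℕ → ℕ × ℕ × ℕ, Function.Bijective f ∧
    ∀ A ∈ BI, f ⁻¹' A ∈ FinFin := by
  classical
  let e : ℕ ≃ ℕ × ℕ := (Denumerable.eqv (ℕ × ℕ)).symm
  refine ⟨fun p => ((e p.1).1, (e p.1).2, p.2), ?_, ?_⟩
  · constructor
    · rintro ⟨n, m⟩ ⟨n', m'⟩ h
      simp only [Prod.mk.injEq] at h
      obtain ⟨h1, h2, h3⟩ := h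
      have : e n = e n' := Prod.ext h1 h2
      exact Prod.ext (e.injective this) h3
    · rintro ⟨i, j, m⟩
      exact ⟨(e.symm (i, j), m), by simp⟩
  · intro A hA
    obtain ⟨k, hk1, hk2⟩ := hA
    have hB : ({q : ℕ × ℕ | ¬ ({m | (q.1, q.2, m) ∈ A}).Finite}).Finite := by
      have hsub : {q : ℕ × ℕ | ¬ ({m | (q.1, q.2, m) ∈ A}).Finite} ⊆
          ⋃ i ∈ Finset.range k, Prod.mk i '' {j | ¬ ({m | (i, j, m) ∈ A}).Finite} := by
        rintro ⟨i, j⟩ hij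
        simp only [mem_iUnion, Finset.mem_range, mem_image, mem_setOf_eq]
        by_cases hik : i < k
        · exact ⟨i, hik, j, hij, rfl⟩
        · exfalso
          apply hij
          have hsub' : ({m | (i, j, m) ∈ A}) ⊆ Prod.snd '' (BIsec i A) := by
            intro m hm; exact ⟨(j, m), hm, rfl⟩
          exact ((hk2 i (le_of_not_gt hik)).image Prod.snd).subset hsub'
      refine Set.Finite.subset ?_ hsub
      apply Set.Finite.biUnion (Finset.range k).finite_toSet
      intro i hi
      exact (hk1 i (Finset.mem_range.mp hi)).image _
    exact hB.preimage (e.injective.injOn)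
end

section
/- There is no bijection f : ω³ → ω² such that f⁻¹[A] ∈ BI for all A ∈ Fin⊗Fin; that is, BI does not contain an isomorphic copy of Fin² (Fin² ⊄ BI in the copy order). -/
open Set

lemma pigeon {α : Type*} {S : Set α} (hS : S.Infinite) {g : α → ℕ} {N : ℕ}
    (h : ∀ x ∈ S, g x < N) : ∃ n, {x | x ∈ S ∧ g x = n}.Infinite := by
  by_contra hc
  push_neg at hc
  have hsub : S ⊆ ⋃ n ∈ Finset.range N, {x | x ∈ S ∧ g x = n} := by
    intro x hx
    simp only [Set.mem_iUnion, Finset.mem_range]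
    exact ⟨g x, h x hx, hx, rfl⟩
  exact hS (Set.Finite.subset (Set.Finite.biUnion (Finset.range N).finite_toSet
    (fun n _ => hc n)) hsub)

lemma col_mem_FinFin (n : ℕ) : {q : ℕ × ℕ | q.1 = n} ∈ FinFin := by
  have hsub : {n' : ℕ | ¬ ({m : ℕ | (n', m) ∈ {q : ℕ × ℕ | q.1 = n}}).Finite} ⊆ {n} := by
    intro n' hn'
    simp only [Set.mem_setOf_eq] at hn'
    simp only [Set.mem_singleton_iff]
    by_contra h
    apply hn'
    simp [h]
  exact Set.Finite.subset (Set.finite_singleton n) hsub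

/-- `BI` contains no isomorphic copy of `Fin²`. -/
theorem stmt_3 : ¬ ∃ f : ℕ × ℕ × ℕ → ℕ × ℕ, Function.Bijective f ∧
    ∀ A ∈ FinFin, f ⁻¹' A ∈ BI := by
  rintro ⟨f, hbij, hpre⟩
  -- Step 1: every plane image meets columns with unbounded indices.
  have hA : ∀ i N : ℕ, ∃ p : ℕ × ℕ, N ≤ (f (i, p)).1 := by
    intro i N
    by_contra hc
    push_neg at hc
    -- for each j, pigeonhole on m
    have h1 : ∀ j : ℕ, ∃ n, ({m : ℕ | (f (i, j, m)).1 = n}).Infinite ∧ n < N := by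
      intro j
      obtain ⟨n, hn⟩ := pigeon (Set.infinite_univ (α := ℕ))
        (g := fun m => (f (i, j, m)).1) (fun m _ => hc (j, m))
      have hinf : ({m : ℕ | (f (i, j, m)).1 = n}).Infinite :=
        hn.mono (fun m hm => hm.2)
      obtain ⟨m, hm⟩ := hinf.nonempty
      exact ⟨n, hinf, hm ▸ hc (j, m)⟩
    choose nn hnn hnN using h1
    obtain ⟨nstar, hstar⟩ := pigeon (Set.infinite_univ (α := ℕ))
      (g := nn) (fun j _ => hnN j)
    have hstar' : ({j : ℕ | nn j = nstar}).Infinite := hstar.mono (fun j hj => hj.2)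
    obtain ⟨k, hk1, hk2⟩ := hpre {q : ℕ × ℕ | q.1 = nstar} (col_mem_FinFin nstar)
    by_cases hik : i < k
    · have hFF := hk1 i hik
      simp only [FinFin, BIsec, Set.mem_setOf_eq, Set.mem_preimage] at hFF
      have : ({j : ℕ | nn j = nstar}) ⊆
          {j : ℕ | ¬ ({m : ℕ | (f (i, j, m)).1 = nstar}).Finite} := by
        intro j hj
        simp only [Set.mem_setOf_eq] at hj ⊢
        rw [← hj]
        exact hnn j
      exact (hstar'.mono this) hFF
    · have hfin := hk2 i (le_of_not_gt hik)
      obtain ⟨j₀, hj₀⟩ := hstar'.nonempty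
      simp only [Set.mem_setOf_eq] at hj₀
      have hM : ({m : ℕ | (f (i, j₀, m)).1 = nstar}).Infinite := by
        rw [← hj₀]; exact hnn j₀
      have hinj : Function.Injective (fun m : ℕ => ((j₀, m) : ℕ × ℕ)) := by
        intro a b h; simpa using h
      have himg : ((fun m : ℕ => ((j₀, m) : ℕ × ℕ)) ''
          {m : ℕ | (f (i, j₀, m)).1 = nstar}) ⊆ BIsec i (f ⁻¹' {q : ℕ × ℕ | q.1 = nstar}) := by
        rintro p ⟨m, hm, rfl⟩
        exact hm
      exact ((hM.image hinj.injOn).mono himg) hfin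
  -- Step 2: build the selector set A.
  choose s hs using fun it : ℕ × ℕ => hA it.1 (it.1 + it.2)
  set A : Set (ℕ × ℕ) := Set.range (fun it : ℕ × ℕ => f (it.1, s it)) with hAdef
  have hsec : ∀ n : ℕ, ({m : ℕ | (n, m) ∈ A}).Finite := by
    intro n
    have hfin : ({it : ℕ × ℕ | it.1 + it.2 ≤ n}).Finite := by
      apply ((Set.finite_Iic n).prod (Set.finite_Iic n)).subset
      intro it hit
      simp only [Set.mem_setOf_eq] at hit
      constructor <;> simp only [Set.mem_Iic] <;> omega
    apply (hfin.image (fun it => (f (it.1, s it)).2)).subset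
    rintro m ⟨it, hit⟩
    have hit' : f (it.1, s it) = (n, m) := hit
    refine ⟨it, ?_, ?_⟩
    · have := hs it
      rw [hit'] at this
      simpa using this
    · show (f (it.1, s it)).2 = m
      rw [hit']
  have hAFF : A ∈ FinFin := by
    have : {n : ℕ | ¬ ({m : ℕ | (n, m) ∈ A}).Finite} = ∅ := by
      ext n; simp [hsec n]
    simp only [FinFin, Set.mem_setOf_eq, this]
    exact Set.finite_empty
  obtain ⟨k, hk1, hk2⟩ := hpre A hAFF
  have hfin := hk2 k le_rfl
  have hmem : ∀ t : ℕ, s (k, t) ∈ BIsec k (f ⁻¹' A) := by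
    intro t
    exact ⟨(k, t), rfl⟩
  have hFfin : ((fun p : ℕ × ℕ => (f (k, p)).1) '' (BIsec k (f ⁻¹' A))).Finite :=
    hfin.image _
  obtain ⟨B, hB⟩ := hFfin.bddAbove
  have hle : (f (k, s (k, B + 1))).1 ≤ B :=
    hB ⟨s (k, B + 1), hmem (B + 1), rfl⟩
  have hge := hs (k, B + 1)
  simp only at hge
  omega
end

section
/- The countable family Z = {{(i,j)}×ω : i,j ∈ ω} ∪ {{i}×ω² : i ∈ ω} of subsets of ω³ has the property that for every A ∉ BI there is a set X ∈ Z such that both A ∩ X and A \ X are infinite. -/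
open Set

open Function

/-- The countable family `Z` of subsets of `ω³`. -/
def Zfam : Set (Set (ℕ × ℕ × ℕ)) :=
  {X | ∃ i j : ℕ, X = {p : ℕ × ℕ × ℕ | p.1 = i ∧ p.2.1 = j}} ∪
  {X | ∃ i : ℕ, X = {p : ℕ × ℕ × ℕ | p.1 = i}}

/- A set outside `BI` either has two infinite sections `A_(i₀)`, `A_(i₁)` (then `{i₀} × ω²`
splits it), or has a section outside `Fin ⊗ Fin`, i.e. two infinite lines `{(i₀, j)} × ω`,
`{(i₀, j')} × ω` meeting it infinitely (then `{(i₀, j)} × ω` splits it). -/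

theorem Set.Infinite.inter_range {α β : Type*} {A : Set α} {f : β → α} (hf : Injective f)
    (h : (f ⁻¹' A).Infinite) : (A ∩ range f).Infinite := by
  rw [← image_preimage_eq_inter_range]
  exact h.image hf.injOn

theorem infinite_inter_and_diff_of_injective {α β γ : Type*} {A X : Set α} {f : β → α}
    {g : γ → α} (hf : Injective f) (hg : Injective g) (hfX : range f ⊆ X)
    (hgX : Disjoint (range g) X) (hfA : (f ⁻¹' A).Infinite) (hgA : (g ⁻¹' A).Infinite) :
    (A ∩ X).Infinite ∧ (A \ X).Infinite :=
  ⟨(hfA.inter_range hf).mono (inter_subset_inter_right A hfX),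
    (hgA.inter_range hg).mono fun _ h => ⟨h.1, hgX.notMem_of_mem_left h.2⟩⟩

theorem infinite_setOf_infinite_BIsec_of_notMem_BI {A : Set (ℕ × ℕ × ℕ)} (hA : A ∉ BI)
    (hfin : ∀ i, BIsec i A ∈ FinFin) : {i | (BIsec i A).Infinite}.Infinite := by
  intro hbdd
  obtain ⟨k, hk⟩ := hbdd.bddAbove
  refine hA ⟨k + 1, fun i _ => hfin i, fun i hi => ?_⟩
  by_contra hinf
  have : i ≤ k := hk hinf
  omega

/-- Every `BI`-positive set is split by a member of `Z`. -/
theorem stmt_4 : ∀ A : Set (ℕ × ℕ × ℕ), A ∉ BI →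
    ∃ X ∈ Zfam, (A ∩ X).Infinite ∧ (A \ X).Infinite := by
  intro A hA
  by_cases hfin : ∀ i, BIsec i A ∈ FinFin
  · obtain ⟨i₀, hi₀, i₁, hi₁, hne⟩ := (infinite_setOf_infinite_BIsec_of_notMem_BI hA hfin).nontrivial
    refine ⟨{p | p.1 = i₀}, Or.inr ⟨i₀, rfl⟩,
      infinite_inter_and_diff_of_injective (Prod.mk_right_injective i₀)
        (Prod.mk_right_injective i₁) ?_ ?_ hi₀ hi₁⟩
    · rintro _ ⟨p, rfl⟩
      rfl
    · refine disjoint_left.mpr ?_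
      rintro _ ⟨p, rfl⟩ (h : i₁ = i₀)
      exact hne h.symm
  · push Not at hfin
    obtain ⟨i₀, hi₀⟩ := hfin
    obtain ⟨j, hj, j', hj', hne⟩ := Set.Infinite.nontrivial hi₀
    refine ⟨{p | p.1 = i₀ ∧ p.2.1 = j}, Or.inl ⟨i₀, j, rfl⟩,
      infinite_inter_and_diff_of_injective (f := fun m => (i₀, j, m))
        (g := fun m => (i₀, j', m)) (fun _ _ h => by simpa using h)
        (fun _ _ h => by simpa using h) ?_ ?_ (not_finite.mp hj) (not_finite.mp hj')⟩
    · rintro _ ⟨m, rfl⟩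
      exact ⟨rfl, rfl⟩
    · refine disjoint_left.mpr ?_
      rintro _ ⟨m, rfl⟩ ⟨-, h : j' = j⟩
      exact hne h.symm
end

section
/- For the ideal conv on ℚ ∩ [0,1] generated by convergent sequences, and for every function f : ℚ∩[0,1] → ω² with all fibers f⁻¹[{(i,j)}] ∈ conv, there exists a set A ∉ conv such that f restricted to A is finite-to-one and f[A] ∈ Fin⊗Fin. -/
open Set

/-- The rationals of the unit interval. -/
abbrev Q01 : Type := {q : ℚ // q ∈ Set.Icc (0 : ℚ) 1}

/-- The ideal `conv` on `ℚ ∩ [0,1]`: sets with only finitely many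
accumulation points in `[0,1]` (equivalently in `ℝ`). -/
def convIdeal : Set (Set Q01) :=
  {A | {x : ℝ | AccPt x (Filter.principal ((fun q : Q01 => (q.1 : ℝ)) '' A))}.Finite}

/-!
For points of `M` labelled by `g`, call `x` a fresh accumulation point of `M` if `x` still
accumulates at `M` after the points carrying any finitely many labels are removed. Given
infinitely many fresh accumulation points, a diagonal recursion picks `A ⊆ M` with pairwise
distinct labels that still accumulates at infinitely many points, so `A ∉ conv`.

If some column `{q | (f q).1 = i}` has infinitely many fresh accumulation points for the row
label, this gives `A` inside one column on which `f` is injective. Otherwise only countably many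
reals are fresh for some column or accumulate at some fibre of `f`. At any other `y ∈ (0, 1)` no
column accumulates, because a column that does but is not fresh at `y` accumulates at `y` through
one of finitely many fibres. Hence `y` is fresh for `ℚ ∩ [0, 1]` labelled by columns, and the
resulting `A` meets every column at most once.
-/

open Set Filter Topology Function

theorem exists_seq_mem_injective_comp {α β : Type*} (g : α → β) (P : ℕ → Set α)
    (hP : ∀ t (F : Finset β), ∃ a ∈ P t, g a ∉ F) :
    ∃ a : ℕ → α, (∀ t, a t ∈ P t) ∧ Injective (g ∘ a) := by
  classical
  choose c hcP hcF using hP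
  -- `used t` holds the labels of the points chosen before step `t`
  let used : ℕ → Finset β := fun t => Nat.rec ∅ (fun s F => insert (g (c s F)) F) t
  have hused : Monotone used := monotone_nat_of_le_succ fun t => Finset.subset_insert _ _
  refine ⟨fun t => c t (used t), fun t => hcP _ _,
    .of_lt_imp_ne fun s t hst heq => hcF t (used t) ?_⟩
  have heq' : g (c s (used s)) = g (c t (used t)) := heq
  exact heq' ▸ hused hst (Finset.mem_insert_self _ _)

theorem Set.InjOn.subsingleton_inter_preimage_singleton {α β : Type*} {f : α → β} {A : Set α}
    (hf : InjOn f A) (b : β) : (A ∩ f ⁻¹' {b}).Subsingleton :=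
  fun _ hx _ hy => hf hx.1 hy.1 (hx.2.trans hy.2.symm)

section FreshAccPt

variable {X α β : Type*} [TopologicalSpace X] (e : α → X) (g : α → β)

def freshAccPts (M : Set α) : Set X :=
  {x | ∀ F : Finset β, AccPt x (𝓟 (e '' (M \ g ⁻¹' F)))}

variable {e g}

theorem accPt_image_iff_mem_freshAccPts {M : Set α} {y : X}
    (hfib : ∀ b, ¬ AccPt y (𝓟 (e '' (M ∩ g ⁻¹' {b})))) :
    AccPt y (𝓟 (e '' M)) ↔ y ∈ freshAccPts e g M := by
  refine ⟨fun hM F => ?_, fun h => (h ∅).mono (principal_mono.2 (image_mono sdiff_subset))⟩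
  simp only [accPt_iff_frequently_nhdsNE, not_frequently] at hM hfib ⊢
  have hF : ∀ᶠ z in 𝓝[≠] y, ∀ b ∈ F, z ∉ e '' (M ∩ g ⁻¹' {b}) :=
    (eventually_all_finset F).2 fun b _ => hfib b
  refine (hM.and_eventually hF).mono ?_
  rintro _ ⟨⟨q, hq, rfl⟩, hqF⟩
  exact ⟨q, ⟨hq, fun hgq => hqF _ hgq ⟨q, ⟨hq, rfl⟩, rfl⟩⟩, rfl⟩

theorem exists_injOn_infinite_accPt_image [FirstCountableTopology X] {M : Set α}
    (hM : (freshAccPts e g M).Infinite) :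
    ∃ A ⊆ M, InjOn g A ∧ {x | AccPt x (𝓟 (e '' A))}.Infinite := by
  let x : ℕ → X := fun k => hM.natEmbedding _ k
  have hx : Injective x := Subtype.val_injective.comp (hM.natEmbedding _).injective
  choose u hu using fun k => (𝓝 (x k)).exists_antitone_basis
  -- step `t = pair k n` picks a point of `M` in the `n`-th punctured basic neighbourhood of `x k`
  let P : ℕ → Set α := fun t => M ∩ e ⁻¹' (u t.unpair.1 t.unpair.2 \ {x t.unpair.1})
  obtain ⟨a, haP, hinj⟩ := exists_seq_mem_injective_comp g P fun t F => by
    obtain ⟨_, ⟨hu', q, hq, rfl⟩, hne⟩ :=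
      accPt_iff_nhds.1 ((hM.natEmbedding _ _).2 F) _ ((hu _).mem _)
    exact ⟨q, ⟨hq.1, hu', hne⟩, hq.2⟩
  refine ⟨range a, range_subset_iff.2 fun t => (haP t).1, ?_, ?_⟩
  · rintro _ ⟨s, rfl⟩ _ ⟨t, rfl⟩ hst
    rw [hinj hst]
  · refine (infinite_range_of_injective hx).mono (range_subset_iff.2 fun k => ?_)
    refine accPt_iff_nhds.2 fun U hU => ?_
    obtain ⟨n, hnU⟩ := (hu k).mem_iff.1 hU
    have ha := (haP (Nat.pair k n)).2
    simp only [Nat.unpair_pair] at ha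
    exact ⟨_, ⟨hnU ha.1, mem_image_of_mem _ (mem_range_self _)⟩, ha.2⟩

end FreshAccPt

theorem mem_finFin_of_forall_fst_eq {B : Set (ℕ × ℕ)} {i : ℕ} (h : ∀ p ∈ B, p.1 = i) :
    B ∈ FinFin := by
  refine (finite_singleton i).subset fun n hn => by_contra fun hni => hn ?_
  convert finite_empty
  exact eq_empty_of_forall_notMem fun m hm => hni (h _ hm)

theorem mem_finFin_of_injOn_fst {B : Set (ℕ × ℕ)} (h : InjOn Prod.fst B) : B ∈ FinFin := by
  refine finite_empty.subset fun n hn => hn (Subsingleton.finite fun m hm m' hm' => ?_)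
  simpa using h hm hm' rfl

def Q01.toReal (q : Q01) : ℝ := q.1

theorem accPt_range_Q01_toReal {y : ℝ} (hy : y ∈ Ioo 0 1) :
    AccPt y (𝓟 (range Q01.toReal)) := by
  refine accPt_iff_nhds.2 fun U hU => ?_
  obtain ⟨_, ⟨⟨q, rfl⟩, hqy⟩, hqU, hq0, hq1⟩ :=
    (Rat.denseRange_cast.sdiff_singleton y).inter_nhds_nonempty
      (inter_mem hU (Ioo_mem_nhds hy.1 hy.2))
  have hq : q ∈ Icc (0 : ℚ) 1 := ⟨by exact_mod_cast hq0.le, by exact_mod_cast hq1.le⟩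
  exact ⟨q, ⟨hqU, ⟨q, hq⟩, rfl⟩, hqy⟩

theorem infinite_freshAccPts_fst {f : Q01 → ℕ × ℕ} (hf : ∀ p, f ⁻¹' {p} ∈ convIdeal)
    (hcol : ∀ i, (freshAccPts Q01.toReal (Prod.snd ∘ f) ((Prod.fst ∘ f) ⁻¹' {i})).Finite) :
    (freshAccPts Q01.toReal (Prod.fst ∘ f) univ).Infinite := by
  let Bad : Set ℝ :=
    (⋃ i, freshAccPts Q01.toReal (Prod.snd ∘ f) ((Prod.fst ∘ f) ⁻¹' {i})) ∪
      ⋃ p, {x | AccPt x (𝓟 (Q01.toReal '' (f ⁻¹' {p})))}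
  have hBad : Bad.Countable := (countable_iUnion fun i => (hcol i).countable).union
    (countable_iUnion fun p => (hf p).countable)
  have hgood : (Ioo (0 : ℝ) 1 \ Bad).Infinite := fun hfin =>
    (by simp : ¬ (Ioo (0 : ℝ) 1).Countable)
      ((hfin.countable.union hBad).mono (subset_sdiff_union _ _))
  refine hgood.mono ?_
  rintro y ⟨hy, hyBad⟩
  have hfib (p : ℕ × ℕ) : ¬ AccPt y (𝓟 (Q01.toReal '' (f ⁻¹' {p}))) :=
    fun h => hyBad (Or.inr (mem_iUnion.2 ⟨p, h⟩))
  -- a column accumulating at `y` would make `y` fresh for it, as its fibres do not accumulate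
  have hcolumn (i : ℕ) :
      ¬ AccPt y (𝓟 (Q01.toReal '' (univ ∩ (Prod.fst ∘ f) ⁻¹' {i}))) := by
    rw [univ_inter, accPt_image_iff_mem_freshAccPts (g := Prod.snd ∘ f) fun j h =>
      hfib (i, j) (h.mono (principal_mono.2 (image_mono fun q hq => Prod.ext hq.1 hq.2)))]
    exact fun h => hyBad (Or.inl (mem_iUnion.2 ⟨i, h⟩))
  rw [← accPt_image_iff_mem_freshAccPts hcolumn, image_univ]
  exact accPt_range_Q01_toReal hy

theorem stmt_5 : ∀ f : Q01 → ℕ × ℕ, (∀ p : ℕ × ℕ, f ⁻¹' {p} ∈ convIdeal) →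
    ∃ A : Set Q01, A ∉ convIdeal ∧ (∀ p : ℕ × ℕ, (A ∩ f ⁻¹' {p}).Finite) ∧
      f '' A ∈ FinFin := by
  intro f hf
  by_cases hcol : ∃ i,
      (freshAccPts Q01.toReal (Prod.snd ∘ f) ((Prod.fst ∘ f) ⁻¹' {i})).Infinite
  · obtain ⟨i, hi⟩ := hcol
    obtain ⟨A, hAi, hinj, hacc⟩ := exists_injOn_infinite_accPt_image hi
    refine ⟨A, hacc, fun p => (hinj.of_comp.subsingleton_inter_preimage_singleton p).finite,
      mem_finFin_of_forall_fst_eq (i := i) fun _ ⟨_, hq, hfq⟩ => hfq ▸ hAi hq⟩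
  · simp only [not_exists, not_infinite] at hcol
    obtain ⟨A, -, hinj, hacc⟩ :=
      exists_injOn_infinite_accPt_image (infinite_freshAccPts_fst hf hcol)
    exact ⟨A, hacc, fun p => (hinj.of_comp.subsingleton_inter_preimage_singleton p).finite,
      mem_finFin_of_injOn_fst hinj.image_of_comp⟩
end

section
/- Let I be an ideal on ω. The following are equivalent: (i) there is no bijection f : ω → ω³ with f⁻¹[A] ∈ I for all A ∈ BI; (ii) for every function f : ω → ω² there exists A ∉ I such that f[A] ∈ Fin⊗Fin and f restricted to A is either constant or finite-to-one. -/
open Set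

/-!
If `g : ω → ω³` pulls `BI` back into `I`, put `f = (g₁, g₂)`. A set `B ⊆ ω³` is in `BI` exactly
when its shadow on `ω²` is in `Fin ⊗ Fin` and only finitely many of its columns over `ω²` are
infinite; so every `A` on which `f` is constant or finite-to-one with `f[A] ∈ Fin ⊗ Fin` lies in
some `g⁻¹[B]` with `B ∈ BI`, hence in `I`.

Conversely, suppose every such set is in `I`. Then `I` contains an infinite set `Z` (otherwise
`ω` itself would qualify). Redefine `f` on `Z` so that all its fibres become infinite and let
`g n = (f n, position of n in its fibre)`, a bijection. For `B ∈ BI`, `g⁻¹[B]` is covered by `Z`,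
the fibres of `f` over the finitely many infinite columns of `B`, and a set on which `f` is
finite-to-one with image inside the shadow of `B`.
-/

open Function

lemma finite_of_finite_fst_of_finite_sections {α β : Type*} {T : Set (α × β)}
    (hfst : (Prod.fst '' T).Finite) (hsec : ∀ a, {b | (a, b) ∈ T}.Finite) : T.Finite := by
  refine (hfst.biUnion fun a _ => (hsec a).image (Prod.mk a)).subset ?_
  rintro ⟨a, b⟩ h
  exact mem_biUnion (mem_image_of_mem Prod.fst h) (mem_image_of_mem _ h)

namespace IsIdeal

variable {X : Type*} {I : Set (Set X)}

lemma mono (hI : IsIdeal I) {A B : Set X} (hB : B ∈ I) (hAB : A ⊆ B) : A ∈ I :=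
  hI.2.1 B A hB hAB

lemma union_mem (hI : IsIdeal I) {A B : Set X} (hA : A ∈ I) (hB : B ∈ I) : A ∪ B ∈ I :=
  hI.2.2.1 A B hA hB

lemma univ_notMem (hI : IsIdeal I) : univ ∉ I :=
  hI.2.2.2

lemma biUnion_mem (hI : IsIdeal I) {ι : Type*} {s : Set ι} (hs : s.Finite) {t : ι → Set X}
    (ht : ∀ i ∈ s, t i ∈ I) : ⋃ i ∈ s, t i ∈ I := by
  induction s, hs using Set.Finite.induction_on with
  | empty => simpa using hI.1 ∅ finite_empty
  | @insert a s _ _ ih =>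
    rw [biUnion_insert]
    exact hI.union_mem (ht a (mem_insert a s)) (ih fun i hi => ht i (mem_insert_of_mem a hi))

end IsIdeal

lemma mem_finFin_of_subset {A B : Set (ℕ × ℕ)} (hB : B ∈ FinFin) (hAB : A ⊆ B) : A ∈ FinFin :=
  hB.subset fun _ hn hA => hn (hA.subset fun _ hm => hAB hm)

lemma mem_finFin_of_sections_finite {A : Set (ℕ × ℕ)} (h : ∀ n, {m | (n, m) ∈ A}.Finite) :
    A ∈ FinFin := by
  simp [FinFin, h]

lemma preimage_fst_mem_finFin {s : Set ℕ} (hs : s.Finite) : Prod.fst ⁻¹' s ∈ FinFin := by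
  refine hs.subset fun n hn => ?_
  by_contra hns
  exact hn (by simp [hns])

lemma mem_finFin_of_finite {A : Set (ℕ × ℕ)} (hA : A.Finite) : A ∈ FinFin :=
  mem_finFin_of_subset (preimage_fst_mem_finFin (hA.image Prod.fst))
    fun _ hp => mem_image_of_mem Prod.fst hp

def BIcol (B : Set (ℕ × ℕ × ℕ)) (p : ℕ × ℕ) : Set ℕ := {c | (p.1, p.2, c) ∈ B}

def BIshadow (B : Set (ℕ × ℕ × ℕ)) : Set (ℕ × ℕ) := {p | (BIcol B p).Nonempty}

lemma sections_BIshadow (B : Set (ℕ × ℕ × ℕ)) (i : ℕ) :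
    {b | (i, b) ∈ BIshadow B} = Prod.fst '' BIsec i B := by
  ext b
  simp [BIshadow, BIcol, BIsec, Set.Nonempty]

lemma finite_BIcol_of_finite_BIsec {B : Set (ℕ × ℕ × ℕ)} {i : ℕ} (h : (BIsec i B).Finite)
    (b : ℕ) : (BIcol B (i, b)).Finite :=
  show (Prod.mk b ⁻¹' BIsec i B).Finite from h.preimage (Prod.mk_right_injective b).injOn

theorem mem_BI_iff {B : Set (ℕ × ℕ × ℕ)} :
    B ∈ BI ↔ BIshadow B ∈ FinFin ∧ {p | (BIcol B p).Infinite}.Finite := by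
  constructor
  · rintro ⟨k, hlt, hge⟩
    refine ⟨(finite_Iio k).subset fun i hi => ?_, ?_⟩
    · by_contra hik
      exact hi ((sections_BIshadow B i).symm ▸ (hge i (not_lt.1 hik)).image Prod.fst)
    apply finite_of_finite_fst_of_finite_sections
    · refine (finite_Iio k).subset ?_
      rintro _ ⟨p, hp, rfl⟩
      by_contra hpk
      exact hp (finite_BIcol_of_finite_BIsec (hge p.1 (not_lt.1 hpk)) p.2)
    · intro i
      by_cases hik : i < k
      · exact hlt i hik
      · refine finite_empty.subset fun b hb => hb ?_
        exact finite_BIcol_of_finite_BIsec (hge i (not_lt.1 hik)) b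
  · rintro ⟨hshadow, hcol⟩
    obtain ⟨m, hm⟩ := (hshadow.union (hcol.image Prod.fst)).bddAbove
    refine ⟨m + 1, fun i _ => hcol.preimage (Prod.mk_right_injective i).injOn, fun i hi => ?_⟩
    have him : i ∉ _ := fun h => absurd (hm h) (by omega)
    apply finite_of_finite_fst_of_finite_sections
    · rw [← sections_BIshadow]
      by_contra h
      exact him (Or.inl h)
    · intro b
      by_contra h
      exact him (Or.inr ⟨(i, b), h, rfl⟩)

def IsTameOn (f : ℕ → ℕ × ℕ) (A : Set ℕ) : Prop :=
  f '' A ∈ FinFin ∧ ((∃ c, ∀ n ∈ A, f n = c) ∨ ∀ p : ℕ × ℕ, (A ∩ f ⁻¹' {p}).Finite)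

lemma isTameOn_preimage_singleton (f : ℕ → ℕ × ℕ) (p : ℕ × ℕ) : IsTameOn f (f ⁻¹' {p}) :=
  ⟨mem_finFin_of_subset (mem_finFin_of_finite (finite_singleton p)) (image_preimage_subset f _),
    Or.inl ⟨p, fun _ hn => hn⟩⟩

lemma exists_mem_BI_subset_preimage_of_isTameOn {g : ℕ → ℕ × ℕ × ℕ} {A : Set ℕ}
    (hA : IsTameOn (fun n => ((g n).1, (g n).2.1)) A) : ∃ B ∈ BI, A ⊆ g ⁻¹' B := by
  set f : ℕ → ℕ × ℕ := fun n => ((g n).1, (g n).2.1)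
  obtain ⟨himage, ⟨p, hp⟩ | hfib⟩ := hA
  · refine ⟨{q | (q.1, q.2.1) = p}, mem_BI_iff.2 ⟨?_, (finite_singleton p).subset ?_⟩,
      fun n hn => hp n hn⟩
    · refine mem_finFin_of_finite ((finite_singleton p).subset ?_)
      rintro q ⟨c, hc⟩
      exact hc
    · rintro q hq
      obtain ⟨c, hc⟩ := hq.nonempty
      exact hc
  · refine ⟨g '' A, mem_BI_iff.2 ⟨?_, finite_empty.subset fun p hp => hp ?_⟩,
      subset_preimage_image g A⟩
    · refine mem_finFin_of_subset himage ?_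
      rintro q ⟨c, n, hn, hgn⟩
      exact ⟨n, hn, by simp [f, hgn]⟩
    · refine ((hfib p).image fun n => (g n).2.2).subset ?_
      rintro c ⟨n, hn, hgn⟩
      exact ⟨n, ⟨hn, by simp [f, hgn]⟩, by simp [hgn]⟩

lemma exists_infinite_mem_of_forall_isTameOn {I : Set (Set ℕ)} (hI : IsIdeal I)
    {f : ℕ → ℕ × ℕ} (hf : ∀ A, IsTameOn f A → A ∈ I) : ∃ Z ∈ I, Z.Infinite := by
  by_contra! hfin
  have hfib : ∀ A p, (A ∩ f ⁻¹' {p}).Finite := fun A p =>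
    (hfin _ (hf _ (isTameOn_preimage_singleton f p))).subset inter_subset_right
  have hcolumn : ∀ a, (f ⁻¹' (Prod.fst ⁻¹' {a})).Finite := fun a =>
    hfin _ (hf _ ⟨mem_finFin_of_subset (preimage_fst_mem_finFin (finite_singleton a))
      (image_preimage_subset _ _), Or.inr (hfib _)⟩)
  refine hI.univ_notMem (hf univ ⟨mem_finFin_of_sections_finite fun a => ?_, Or.inr (hfib univ)⟩)
  refine ((hcolumn a).image fun n => (f n).2).subset ?_
  rintro b ⟨n, -, hn⟩
  exact ⟨n, by simp [hn], by simp [hn]⟩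

lemma exists_eq_off_of_infinite_fibers {β : Type*} [Countable β] [Nonempty β] (f : ℕ → β)
    {Z : Set ℕ} (hZ : Z.Infinite) :
    ∃ f' : ℕ → β, (∀ n ∉ Z, f' n = f n) ∧ ∀ b, (f' ⁻¹' {b}).Infinite := by
  -- `w` embeds `ℕ × ℕ` into `Z`; on its range, `f` is replaced by `σ ∘ Prod.fst`.
  obtain ⟨σ, hσ⟩ := exists_surjective_nat β
  set w : ℕ × ℕ → ℕ := fun x => Nat.nth (· ∈ Z) (Nat.pair x.1 x.2)
  have hw : Injective w := fun x y h => by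
    simpa [Prod.ext_iff] using Nat.nth_injective hZ h
  refine ⟨extend w (σ ∘ Prod.fst) f, fun n hn => extend_apply' _ _ _ ?_, fun b => ?_⟩
  · rintro ⟨x, rfl⟩
    exact hn (Nat.nth_mem_of_infinite hZ _)
  · obtain ⟨a, rfl⟩ := hσ b
    refine infinite_of_injective_forall_mem (f := fun k => w (a, k)) ?_ fun k => ?_
    · exact fun k l h => (Prod.ext_iff.1 (hw h)).2
    · exact hw.extend_apply _ _ (a, k)

section FiberEnum

variable {β : Type*} [DecidableEq β] (f : ℕ → β)

def fiberEnum (n : ℕ) : β × ℕ := (f n, Nat.count (fun m => f m = f n) n)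

lemma fiberEnum_injective : Injective (fiberEnum f) := by
  intro n m h
  have hf : f n = f m := congrArg Prod.fst h
  have hc := congrArg Prod.snd h
  simp only [fiberEnum, hf] at hc
  exact Nat.count_injective (p := fun k => f k = f m) hf rfl hc

lemma fiberEnum_surjective (h : ∀ b, (f ⁻¹' {b}).Infinite) : Surjective (fiberEnum f) := by
  rintro ⟨b, c⟩
  have hb : f (Nat.nth (fun m => f m = b) c) = b := Nat.nth_mem_of_infinite (h b) c
  refine ⟨Nat.nth (fun m => f m = b) c, ?_⟩
  rw [fiberEnum, hb, Nat.count_nth_of_infinite (p := fun m => f m = b) (h b)]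

end FiberEnum

theorem exists_bijective_preimage_BI_mem_of_forall_isTameOn {I : Set (Set ℕ)} (hI : IsIdeal I)
    {f : ℕ → ℕ × ℕ} (hf : ∀ A, IsTameOn f A → A ∈ I) :
    ∃ g : ℕ → ℕ × ℕ × ℕ, Bijective g ∧ ∀ B ∈ BI, g ⁻¹' B ∈ I := by
  obtain ⟨Z, hZI, hZ⟩ := exists_infinite_mem_of_forall_isTameOn hI hf
  obtain ⟨f', hf'f, hf'fib⟩ := exists_eq_off_of_infinite_fibers f hZ
  refine ⟨Equiv.prodAssoc _ _ _ ∘ fiberEnum f', (Equiv.prodAssoc _ _ _).bijective.comp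
    ⟨fiberEnum_injective f', fiberEnum_surjective f' hf'fib⟩, fun B hB => ?_⟩
  obtain ⟨hshadow, hS⟩ := mem_BI_iff.1 hB
  set S := {p | (BIcol B p).Infinite}
  set A := (Equiv.prodAssoc _ _ _ ∘ fiberEnum f') ⁻¹' B \ (Z ∪ f ⁻¹' S)
  have hcol : ∀ n ∈ A, (fiberEnum f' n).2 ∈ BIcol B (f n) := fun n hn =>
    hf'f n (fun h => hn.2 (Or.inl h)) ▸ hn.1
  have hA : A ∈ I := by
    refine hf A ⟨mem_finFin_of_subset hshadow ?_, Or.inr fun p => ?_⟩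
    · rintro _ ⟨n, hn, rfl⟩
      exact ⟨_, hcol n hn⟩
    by_cases hp : p ∈ S
    · refine finite_empty.subset fun n hn => hn.1.2 (Or.inr ?_)
      rwa [mem_preimage, (hn.2 : f n = p)]
    refine (((finite_singleton p).prod (not_not.1 hp)).preimage
      (fiberEnum_injective f').injOn).subset fun n hn => ?_
    have hfn : f n = p := hn.2
    exact ⟨(hf'f n fun h => hn.1.2 (Or.inl h)).trans hfn, hfn ▸ hcol n hn.1⟩
  have hfS : f ⁻¹' S ∈ I := by
    rw [← biUnion_preimage_singleton]
    exact hI.biUnion_mem hS fun p _ => hf _ (isTameOn_preimage_singleton f p)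
  refine hI.mono (hI.union_mem (hI.union_mem hZI hfS) hA) fun n hn => ?_
  by_cases hnZS : n ∈ Z ∪ f ⁻¹' S
  · exact Or.inl hnZS
  · exact Or.inr ⟨hn, hnZS⟩

theorem stmt_6 (I : Set (Set ℕ)) (hI : IsIdeal I) :
    (¬ ∃ f : ℕ → ℕ × ℕ × ℕ, Function.Bijective f ∧ ∀ A ∈ BI, f ⁻¹' A ∈ I) ↔
    (∀ f : ℕ → ℕ × ℕ, ∃ A : Set ℕ, A ∉ I ∧ f '' A ∈ FinFin ∧
      ((∃ c, ∀ n ∈ A, f n = c) ∨ ∀ p : ℕ × ℕ, (A ∩ f ⁻¹' {p}).Finite)) := by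
  constructor
  · intro hno f
    by_contra hf
    exact hno (exists_bijective_preimage_BI_mem_of_forall_isTameOn hI fun A hA =>
      by_contra fun hAI => hf ⟨A, hAI, hA⟩)
  · rintro h ⟨g, -, hg⟩
    obtain ⟨A, hAI, hA⟩ := h fun n => ((g n).1, (g n).2.1)
    obtain ⟨B, hB, hAB⟩ := exists_mem_BI_subset_preimage_of_isTameOn hA
    exact hAI (hI.mono (hg B hB) hAB)
end

section
/- An ideal I on ω is a hereditary weak P-ideal if and only if it is hereditarily unboring, i.e., for no B ∉ I does the restriction I|B contain an isomorphic copy of BI. -/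
open Set

/-- `I|B` contains an isomorphic copy of `Fin ⊗ Fin`. -/
def FinFinCopyOn (I : Set (Set ℕ)) (B : Set ℕ) : Prop :=
  ∃ g : ℕ → ℕ × ℕ, Set.BijOn g B Set.univ ∧ ∀ C ∈ FinFin, B ∩ g ⁻¹' C ∈ I

/-- `I` is a hereditary weak P-ideal. -/
def HWP (I : Set (Set ℕ)) : Prop := ∀ B : Set ℕ, B ∉ I → ¬ FinFinCopyOn I B

/-- `I|B` contains an isomorphic copy of `BI`. -/
def BICopyOn (I : Set (Set ℕ)) (B : Set ℕ) : Prop :=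
  ∃ g : ℕ → ℕ × ℕ × ℕ, Set.BijOn g B Set.univ ∧ ∀ A ∈ BI, B ∩ g ⁻¹' A ∈ I

/-!
Both directions are transfers of copies along bijections of the underlying sets.
Every `BI`-set has only finitely many infinite fibres `{(i, j)} × ω`, so coding the pair
`(i, j)` by one number pulls `BI` back into `Fin ⊗ Fin`: a copy of `Fin ⊗ Fin` gives a copy
of `BI`. Conversely, let `g` be a copy of `BI` on `B ∉ I`. Each level `{i} × ω²` carries
`Fin ⊗ Fin`, so if some level has a preimage outside `I`, that preimage carries a copy of
`Fin ⊗ Fin`. Otherwise coding `ω²` by `ω` inside every level works: a `Fin ⊗ Fin`-set pulls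
back to a set with finite sections off finitely many levels, hence into `BI`, up to a finite
union of level preimages, which lie in `I`.
-/

def IdealCopyOn {α X : Type*} (I : Set (Set α)) (B : Set α) (J : Set (Set X)) : Prop :=
  ∃ g : α → X, BijOn g B univ ∧ ∀ A ∈ J, B ∩ g ⁻¹' A ∈ I

def infiniteColumns (C : Set (ℕ × ℕ)) : Set ℕ := {n | ¬ ({m | (n, m) ∈ C}).Finite}

lemma mem_FinFin_iff {C : Set (ℕ × ℕ)} : C ∈ FinFin ↔ (infiniteColumns C).Finite := Iff.rfl

lemma finite_column_of_finite {C : Set (ℕ × ℕ)} (hC : C.Finite) (n : ℕ) :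
    ({m | (n, m) ∈ C}).Finite :=
  hC.preimage (Prod.mk_right_injective n).injOn

lemma infiniteColumns_eq_empty_of_finite {C : Set (ℕ × ℕ)} (hC : C.Finite) :
    infiniteColumns C = ∅ :=
  eq_empty_iff_forall_notMem.2 fun n hn => hn (finite_column_of_finite hC n)

lemma mem_FinFin_of_finite {C : Set (ℕ × ℕ)} (hC : C.Finite) : C ∈ FinFin := by
  rw [mem_FinFin_iff, infiniteColumns_eq_empty_of_finite hC]
  exact finite_empty

lemma mem_BI_of_forall_finite {A : Set (ℕ × ℕ × ℕ)} (hA : ∀ i, (BIsec i A).Finite) : A ∈ BI :=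
  ⟨0, fun _ hi => absurd hi (Nat.not_lt_zero _), fun i _ => hA i⟩

lemma singleton_prod_mem_BI (i : ℕ) {C : Set (ℕ × ℕ)} (hC : C ∈ FinFin) :
    {i} ×ˢ C ∈ BI := by
  have hsec : ∀ j, BIsec j ({i} ×ˢ C) = if j = i then C else ∅ := by
    intro j
    ext p
    by_cases hj : j = i <;> simp [BIsec, hj]
  refine ⟨i + 1, fun j _ => ?_, fun j hj => ?_⟩
  · rw [hsec]
    split_ifs
    exacts [hC, mem_FinFin_of_finite finite_empty]
  · rw [hsec, if_neg (by omega)]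
    exact finite_empty

/-- The bijection `ω × ω² → ω²`, `(i, p) ↦ (i, ⟨p⟩)`, coding `p` by a single number. -/
def codeLevels : ℕ × ℕ × ℕ ≃ ℕ × ℕ := (Equiv.refl ℕ).prodCongr Nat.pairEquiv

lemma preimage_codeLevels_subset (C : Set (ℕ × ℕ)) :
    ∃ D ∈ BI, codeLevels ⁻¹' C ⊆ D ∪ infiniteColumns C ×ˢ univ := by
  refine ⟨codeLevels ⁻¹' C \ infiniteColumns C ×ˢ univ,
    mem_BI_of_forall_finite fun i => ?_, fun x hx => ?_⟩
  · by_cases hi : i ∈ infiniteColumns C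
    · refine finite_empty.subset fun p hp => hp.2 ⟨hi, trivial⟩
    · exact ((not_not.1 hi).preimage Nat.pairEquiv.injective.injOn).subset fun p hp => hp.1
  · by_cases hx' : x.1 ∈ infiniteColumns C
    · exact Or.inr ⟨hx', trivial⟩
    · exact Or.inl ⟨hx, fun h => hx' h.1⟩

/-- The bijection `ω² → ω³`, `(n, m) ↦ (i, j, m)` where `n = ⟨i, j⟩`. -/
def decodeColumns : ℕ × ℕ ≃ ℕ × ℕ × ℕ :=
  (Nat.pairEquiv.symm.prodCongr (Equiv.refl ℕ)).trans (Equiv.prodAssoc ℕ ℕ ℕ)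

lemma preimage_decodeColumns_mem_FinFin {A : Set (ℕ × ℕ × ℕ)} (hA : A ∈ BI) :
    decodeColumns ⁻¹' A ∈ FinFin := by
  obtain ⟨k, hlow, hhigh⟩ := hA
  have hcols : infiniteColumns (decodeColumns ⁻¹' A) =
      Nat.unpair ⁻¹' {q | q.2 ∈ infiniteColumns (BIsec q.1 A)} := rfl
  have hsub : {q : ℕ × ℕ | q.2 ∈ infiniteColumns (BIsec q.1 A)} ⊆
      ⋃ i ∈ Finset.range k, {i} ×ˢ infiniteColumns (BIsec i A) := by
    rintro ⟨i, j⟩ hq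
    have hik : i < k := by
      by_contra! hik
      rw [mem_ofPred_eq, infiniteColumns_eq_empty_of_finite (hhigh i hik)] at hq
      exact hq
    exact mem_biUnion (Finset.mem_range.2 hik) ⟨rfl, hq⟩
  rw [mem_FinFin_iff, hcols]
  refine ((Set.Finite.biUnion (Finset.range k).finite_toSet fun i hi => ?_).subset hsub).preimage
    Nat.pairEquiv.symm.injective.injOn
  exact (finite_singleton i).prod (hlow i (Finset.mem_range.1 hi))

section Ideal

variable {α : Type*} {I : Set (Set α)}

lemma IsIdeal.biUnion_mem_s9 (hI : IsIdeal I) {ι : Type*} {F : Set ι} (hF : F.Finite)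
    {f : ι → Set α} (hf : ∀ i ∈ F, f i ∈ I) : (⋃ i ∈ F, f i) ∈ I := by
  induction F, hF using Set.Finite.induction_on with
  | empty => simpa using hI.1 ∅ finite_empty
  | @insert a s _ _ ih =>
    rw [biUnion_insert]
    exact hI.2.2.1 _ _ (hf a (mem_insert a s)) (ih fun i hi => hf i (mem_insert_of_mem a hi))

variable {B : Set α}

lemma IdealCopyOn.of_equiv {X Y : Type*} {J : Set (Set X)} {K : Set (Set Y)} (e : X ≃ Y)
    (he : ∀ A ∈ K, e ⁻¹' A ∈ J) (h : IdealCopyOn I B J) : IdealCopyOn I B K := by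
  obtain ⟨g, hg, hgJ⟩ := h
  exact ⟨e ∘ g, e.bijective.bijOn_univ.comp hg, fun A hA => hgJ _ (he A hA)⟩

lemma idealCopyOn_slab {ι Y : Type*} {J : Set (Set (ι × Y))} {K : Set (Set Y)}
    {g : α → ι × Y} (hg : BijOn g B univ) (hgJ : ∀ A ∈ J, B ∩ g ⁻¹' A ∈ I) (i : ι)
    (hK : ∀ C ∈ K, {i} ×ˢ C ∈ J) : IdealCopyOn I (B ∩ g ⁻¹' ({i} ×ˢ univ)) K := by
  refine ⟨Prod.snd ∘ g, ⟨mapsTo_univ _ _, ?_, fun y _ => ?_⟩, fun C hC => ?_⟩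
  · intro a ha b hb hab
    exact hg.injOn ha.1 hb.1 (Prod.ext (ha.2.1.trans hb.2.1.symm) hab)
  · obtain ⟨a, ha, hga⟩ := hg.surjOn (mem_univ (i, y))
    exact ⟨a, ⟨ha, by simp [hga]⟩, by simp [hga]⟩
  · convert hgJ _ (hK C hC) using 1
    ext a
    simp [and_assoc]

lemma finFinCopyOn_of_levels_mem (hI : IsIdeal I) {g : α → ℕ × ℕ × ℕ}
    (hg : BijOn g B univ) (hgBI : ∀ A ∈ BI, B ∩ g ⁻¹' A ∈ I)
    (hlevels : ∀ i, B ∩ g ⁻¹' ({i} ×ˢ univ) ∈ I) : IdealCopyOn I B FinFin := by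
  refine ⟨codeLevels ∘ g, codeLevels.bijective.bijOn_univ.comp hg, fun C hC => ?_⟩
  obtain ⟨D, hD, hCD⟩ := preimage_codeLevels_subset C
  refine hI.2.1 _ _ (hI.2.2.1 _ _ (hgBI D hD)
    (hI.biUnion_mem_s9 hC fun i _ => hlevels i)) ?_
  rintro a ⟨haB, haC⟩
  rcases hCD haC with haD | ⟨hi, -⟩
  · exact Or.inl ⟨haB, haD⟩
  · exact Or.inr (mem_biUnion hi ⟨haB, rfl, trivial⟩)

end Ideal

theorem stmt_9 (I : Set (Set ℕ)) (hI : IsIdeal I) :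
    HWP I ↔ ∀ B : Set ℕ, B ∉ I → ¬ BICopyOn I B := by
  constructor
  · rintro hHWP B hB ⟨g, hg, hgBI⟩
    by_cases hlevel : ∃ i, B ∩ g ⁻¹' ({i} ×ˢ univ) ∉ I
    · obtain ⟨i, hi⟩ := hlevel
      exact hHWP _ hi (idealCopyOn_slab hg hgBI i fun C hC => singleton_prod_mem_BI i hC)
    · push Not at hlevel
      exact hHWP B hB (finFinCopyOn_of_levels_mem hI hg hgBI hlevel)
  · intro h B hB hcopy
    exact h B hB (IdealCopyOn.of_equiv decodeColumns
      (fun A hA => preimage_decodeColumns_mem_FinFin hA) hcopy)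
end

section
/- Every P⁺-ideal is a hereditary weak P-ideal: if I is an ideal on ω such that for every decreasing sequence (Aₙ) of I-positive sets there is an I-positive set A with A \ Aₙ finite for all n, then for no B ∉ I does I|B contain an isomorphic copy of Fin⊗Fin. -/
open Set

theorem stmt_11 (I : Set (Set ℕ)) (hI : IsIdeal I)
    (hP : ∀ A : ℕ → Set ℕ, (∀ n, A (n + 1) ⊆ A n) → (∀ n, A n ∉ I) →
      ∃ S : Set ℕ, S ∉ I ∧ ∀ n, (S \ A n).Finite) :
    ∀ B : Set ℕ, B ∉ I → ¬ FinFinCopyOn I B := by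
  intro B hB hcopy
  obtain ⟨g, hbij, hcop⟩ := hcopy
  obtain ⟨hfin, hsub, hunion, -⟩ := hI
  set A : ℕ → Set ℕ := fun n => B ∩ g ⁻¹' {p : ℕ × ℕ | n ≤ p.1} with hA
  have hColFF : ∀ n, {p : ℕ × ℕ | p.1 < n} ∈ FinFin := by
    intro n
    have hsubset : {i : ℕ | ¬ ({m : ℕ | ((i, m) : ℕ × ℕ) ∈ {p : ℕ × ℕ | p.1 < n}}).Finite}
        ⊆ Set.Iio n := by
      intro i hi
      by_contra h
      simp only [Set.mem_Iio, not_lt] at h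
      apply hi
      have : {m : ℕ | ((i, m) : ℕ × ℕ) ∈ {p : ℕ × ℕ | p.1 < n}} = ∅ := by
        ext m; simp; omega
      rw [this]; exact Set.finite_empty
    exact (Set.finite_Iio n).subset hsubset
  have hAnotI : ∀ n, A n ∉ I := by
    intro n hAn
    apply hB
    have hC := hcop _ (hColFF n)
    have : B ⊆ A n ∪ (B ∩ g ⁻¹' {p : ℕ × ℕ | p.1 < n}) := by
      intro x hx
      by_cases h : n ≤ (g x).1
      · exact Or.inl ⟨hx, h⟩
      · exact Or.inr ⟨hx, by simpa using h⟩
    exact hsub _ _ (hunion _ _ hAn hC) this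
  have hAmono : ∀ n, A (n + 1) ⊆ A n := by
    intro n x hx
    exact ⟨hx.1, le_trans (Nat.le_succ n) hx.2⟩
  obtain ⟨S, hS, hSfin⟩ := hP A hAmono hAnotI
  set S' : Set ℕ := S ∩ B with hS'def
  have hS' : S' ∉ I := by
    intro h
    apply hS
    have hfin0 : (S \ A 0) ∈ I := hfin _ (hSfin 0)
    have : S ⊆ S' ∪ (S \ A 0) := by
      intro x hx
      by_cases hxB : x ∈ B
      · exact Or.inl ⟨hx, hxB⟩
      · exact Or.inr ⟨hx, fun hxA => hxB hxA.1⟩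
    exact hsub _ _ (hunion _ _ h hfin0) this
  have hCFF : g '' S' ∈ FinFin := by
    have : ∀ i : ℕ, ({m : ℕ | ((i, m) : ℕ × ℕ) ∈ g '' S'}).Finite := by
      intro i
      have hT : (S' ∩ {x | (g x).1 = i}).Finite := by
        apply (hSfin (i + 1)).subset
        intro x hx
        refine ⟨hx.1.1, fun hxA => ?_⟩
        have h1 : i + 1 ≤ (g x).1 := hxA.2
        have h2 : (g x).1 = i := hx.2
        omega
      have : ({m : ℕ | ((i, m) : ℕ × ℕ) ∈ g '' S'}) ⊆
          (fun x => (g x).2) '' (S' ∩ {x | (g x).1 = i}) := by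
        rintro m ⟨x, hxS', hgx⟩
        exact ⟨x, ⟨hxS', show (g x).1 = i by rw [hgx]⟩, show (g x).2 = m by rw [hgx]⟩
      exact (hT.image _).subset this
    have h0 : {n : ℕ | ¬ ({m : ℕ | ((n, m) : ℕ × ℕ) ∈ g '' S'}).Finite} = ∅ := by
      ext i
      simp only [Set.mem_setOf_eq, Set.mem_empty_iff_false, iff_false, not_not]
      exact this i
    show {n : ℕ | ¬ ({m : ℕ | ((n, m) : ℕ × ℕ) ∈ g '' S'}).Finite}.Finite
    rw [h0]; exact Set.finite_empty
  apply hS'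
  have hsubC : S' ⊆ B ∩ g ⁻¹' (g '' S') := by
    intro x hx
    exact ⟨hx.2, Set.mem_image_of_mem g hx⟩
  exact hsub _ _ (hcop _ hCFF) hsubC
end

section
/- If a family of ideals on ω all extending a given ideal I are hereditary weak P-ideals and I extends to at least one hereditary weak P-ideal, then the intersection of all hereditary weak P-ideals containing I is itself a hereditary weak P-ideal (hence the smallest one containing I). -/
open Set

theorem stmt_12 (I : Set (Set ℕ)) (hI : IsIdeal I)
    (hex : ∃ J : Set (Set ℕ), IsIdeal J ∧ I ⊆ J ∧ HWP J) :
    IsIdeal (⋂₀ {J : Set (Set ℕ) | IsIdeal J ∧ I ⊆ J ∧ HWP J}) ∧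
    HWP (⋂₀ {J : Set (Set ℕ) | IsIdeal J ∧ I ⊆ J ∧ HWP J}) ∧
    I ⊆ ⋂₀ {J : Set (Set ℕ) | IsIdeal J ∧ I ⊆ J ∧ HWP J} ∧
    ∀ J : Set (Set ℕ), IsIdeal J → I ⊆ J → HWP J →
      ⋂₀ {J : Set (Set ℕ) | IsIdeal J ∧ I ⊆ J ∧ HWP J} ⊆ J := by
  obtain ⟨J₀, hJ₀⟩ := hex
  set K := ⋂₀ {J : Set (Set ℕ) | IsIdeal J ∧ I ⊆ J ∧ HWP J} with hK
  have hsub : ∀ J ∈ {J : Set (Set ℕ) | IsIdeal J ∧ I ⊆ J ∧ HWP J}, K ⊆ J :=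
    fun J hJ => sInter_subset_of_mem hJ
  refine ⟨⟨?_, ?_, ?_, ?_⟩, ?_, ?_, ?_⟩
  · intro A hA
    exact fun J hJ => hJ.1.1 A hA
  · intro A B hA hB J hJ
    exact hJ.1.2.1 A B (hA J hJ) hB
  · intro A B hA hB J hJ
    exact hJ.1.2.2.1 A B (hA J hJ) (hB J hJ)
  · intro h
    exact hJ₀.1.2.2.2 (h J₀ hJ₀)
  · intro B hB hcopy
    obtain ⟨J, hJ, hBJ⟩ : ∃ J ∈ {J : Set (Set ℕ) | IsIdeal J ∧ I ⊆ J ∧ HWP J}, B ∉ J := by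
      by_contra h
      push_neg at h
      exact hB fun J hJ => h J hJ
    refine hJ.2.2 B hBJ ?_
    obtain ⟨g, hg, hC⟩ := hcopy
    exact ⟨g, hg, fun C hCf => hsub J hJ (hC C hCf)⟩
  · intro A hA J hJ
    exact hJ.2.1 hA
  · intro J hJ1 hJ2 hJ3
    exact hsub J ⟨hJ1, hJ2, hJ3⟩
end

section
/- Let X be an infinite Hausdorff space. Then X is boring (sequentially compact, and there is a finite set F ⊆ X such that every injective convergent sequence in X converges to a point of F) if and only if X is a disjoint union of finitely many open subspaces, each homeomorphic to the one-point compactification of a discrete space. -/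
open Set

/-- A Hausdorff space is *boring* if it is sequentially compact and some finite
set receives the limits of all injective convergent sequences. -/
def Boring (X : Type*) [TopologicalSpace X] : Prop :=
  SeqCompactSpace X ∧ ∃ F : Finset X, ∀ (x : ℕ → X) (l : X),
    Function.Injective x → Filter.Tendsto x Filter.atTop (nhds l) → l ∈ F

/-- The sequence `(x n)_{n ∈ A}` converges to `l`. -/
def ConvAlong {X : Type*} [TopologicalSpace X] (A : Set ℕ) (x : ℕ → X) (l : X) : Prop :=
  ∀ U ∈ nhds l, {n ∈ A | x n ∉ U}.Finite

/-- `X ∈ FinBW(I)`: every sequence converges along some `I`-positive index set. -/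
def FinBW (I : Set (Set ℕ)) (X : Type*) [TopologicalSpace X] : Prop :=
  ∀ x : ℕ → X, ∃ A : Set ℕ, A ∉ I ∧ ∃ l : X, ConvAlong A x l

/-- The one-point compactification of the discrete space on `D`. -/
noncomputable def OnePointDiscreteTop (D : Type) : TopologicalSpace (OnePoint D) :=
  letI : TopologicalSpace D := ⊥
  inferInstance

/-!
A Hausdorff sequentially compact space is boring exactly when it has finitely many non-isolated
points: the limit of an injective sequence is never isolated, and a non-isolated point outside
the finite set `F` would have an infinite neighbourhood, separated from `F`, containing an injective
convergent sequence whose limit lies in `F`. Separating the finitely many non-isolated points by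
disjoint open sets yields a locally constant retraction onto them. Each fibre is clopen, hence
sequentially compact, with a single non-isolated point `c`; then every neighbourhood of `c` is
cofinite in the fibre, which makes the fibre compact and the one-point compactification of the
discrete space of its other points. Conversely, such a compactification is compact with one
non-isolated point, hence sequentially compact, and both properties pass to finite open covers.
-/

open Filter Topology OnePoint

def nonIsolatedPoints (X : Type*) [TopologicalSpace X] : Set X := {x | ¬IsOpen ({x} : Set X)}

section NonIsolatedPoints

variable {X : Type*} [TopologicalSpace X]

theorem mem_nonIsolatedPoints_of_tendsto {u : ℕ → X} {l : X} (hu : Function.Injective u)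
    (h : Tendsto u atTop (𝓝 l)) : l ∈ nonIsolatedPoints X := by
  intro hl
  obtain ⟨N, hN⟩ := eventually_atTop.1 (h (hl.mem_nhds rfl))
  exact N.succ_ne_self (hu ((hN (N + 1) N.le_succ).trans (hN N le_rfl).symm))

theorem IsOpen.nonIsolatedPoints_subtype {U : Set X} (hU : IsOpen U) :
    nonIsolatedPoints U = (↑) ⁻¹' nonIsolatedPoints X := by
  ext x
  refine not_congr ⟨fun h => ?_, fun h => ?_⟩
  · simpa using hU.isOpenMap_subtype_val _ h
  · rw [← Subtype.val_injective.preimage_image {x}, image_singleton]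
    exact h.preimage continuous_subtype_val

theorem isDiscrete_of_disjoint_nonIsolatedPoints {s : Set X}
    (hs : Disjoint s (nonIsolatedPoints X)) : IsDiscrete s :=
  isDiscrete_iff_forall_mem_exists_isOpen.2 fun y hy =>
    ⟨{y}, not_not.1 (hs.notMem_of_mem_left hy), by simp [hy]⟩

theorem IsClosed.isSeqCompact [SeqCompactSpace X] {U : Set X} (hU : IsClosed U) :
    IsSeqCompact U := fun u hu =>
  let ⟨a, φ, hφ, h⟩ := SeqCompactSpace.tendsto_subseq u
  ⟨a, hU.mem_of_tendsto h (Eventually.of_forall fun n => hu (φ n)), φ, hφ, h⟩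

theorem Set.Infinite.exists_injective_tendsto [SeqCompactSpace X] {s : Set X} (hs : s.Infinite) :
    ∃ u : ℕ → X, Function.Injective u ∧ (∀ n, u n ∈ s) ∧ ∃ l, Tendsto u atTop (𝓝 l) := by
  obtain ⟨l, φ, hφ, hl⟩ := SeqCompactSpace.tendsto_subseq fun n => (hs.natEmbedding s n : X)
  exact ⟨_, (Subtype.val_injective.comp (hs.natEmbedding s).injective).comp hφ.injective,
    fun n => (hs.natEmbedding s (φ n)).2, l, hl⟩

theorem nonIsolatedPoints_nonempty [SeqCompactSpace X] [Infinite X] :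
    (nonIsolatedPoints X).Nonempty := by
  obtain ⟨u, hu, -, l, hl⟩ := Set.infinite_univ (α := X).exists_injective_tendsto
  exact ⟨l, mem_nonIsolatedPoints_of_tendsto hu hl⟩

theorem nonIsolatedPoints_subset_of_tendsto_mem [T2Space X] [SeqCompactSpace X] {F : Set X}
    (hF : F.Finite)
    (hlim : ∀ (u : ℕ → X) (l : X), Function.Injective u → Tendsto u atTop (𝓝 l) → l ∈ F) :
    nonIsolatedPoints X ⊆ F := by
  intro x hx
  by_contra hxF
  obtain ⟨W, V, hW, hV, hxW, hFV, hWV⟩ := SeparatedNhds.of_isCompact_isCompact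
    isCompact_singleton hF.isCompact (disjoint_singleton_left.2 hxF)
  have hWinf : W.Infinite := fun hWfin =>
    hx (isOpen_singleton_of_finite_mem_nhds x (hW.mem_nhds (hxW rfl)) hWfin)
  obtain ⟨u, hu, huW, l, hl⟩ := hWinf.exists_injective_tendsto
  obtain ⟨n, hn⟩ := (hl.eventually_mem (hV.mem_nhds (hFV (hlim u l hu hl)))).exists
  exact hWV.notMem_of_mem_left (huW n) hn

theorem boring_iff [T2Space X] :
    Boring X ↔ SeqCompactSpace X ∧ (nonIsolatedPoints X).Finite := by
  constructor
  · rintro ⟨hX, F, hF⟩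
    exact ⟨hX, F.finite_toSet.subset (nonIsolatedPoints_subset_of_tendsto_mem F.finite_toSet hF)⟩
  · rintro ⟨hX, hfin⟩
    exact ⟨hX, hfin.toFinset, fun u l hu hl =>
      hfin.mem_toFinset.2 (mem_nonIsolatedPoints_of_tendsto hu hl)⟩

theorem cofinite_le_nhds_of_seqCompactSpace [SeqCompactSpace X] {q : X}
    (hq : nonIsolatedPoints X ⊆ {q}) : cofinite ≤ 𝓝 q := by
  intro V hV
  by_contra hinf
  obtain ⟨u, hu, huV, l, hl⟩ := Set.Infinite.exists_injective_tendsto hinf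
  obtain rfl : l = q := hq (mem_nonIsolatedPoints_of_tendsto hu hl)
  obtain ⟨n, hn⟩ := (hl.eventually_mem hV).exists
  exact huV n hn

theorem cofinite_le_nhds_of_compactSpace [CompactSpace X] {q : X}
    (hq : nonIsolatedPoints X ⊆ {q}) : cofinite ≤ 𝓝 q := by
  intro V hV
  obtain ⟨U, hUV, hU, hqU⟩ := mem_nhds_iff.1 hV
  refine (hU.isClosed_compl.isCompact.finite ?_).subset (compl_subset_compl.2 hUV)
  exact isDiscrete_of_disjoint_nonIsolatedPoints
    ((disjoint_singleton_right.2 (not_not_intro hqU)).mono_right hq)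

theorem seqCompactSpace_of_cofinite_le_nhds {q : X} (hq : cofinite ≤ 𝓝 q) :
    SeqCompactSpace X := by
  refine ⟨fun u _ => ?_⟩
  by_cases h : ∃ y, ∃ᶠ n in atTop, u n = y
  · obtain ⟨y, hy⟩ := h
    obtain ⟨φ, hφ, hφy⟩ := extraction_of_frequently_atTop hy
    refine ⟨y, mem_univ y, φ, hφ, ?_⟩
    simp [Function.comp_def, hφy, tendsto_const_nhds]
  · push Not at h
    exact ⟨q, mem_univ q, id, strictMono_id, (le_cofinite_iff_eventually_ne.2 h).trans hq⟩

theorem seqCompactSpace_of_iUnion_eq_univ {ι : Type*} [Finite ι] {U : ι → Set X}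
    (hU : ⋃ i, U i = univ) (h : ∀ i, SeqCompactSpace (U i)) : SeqCompactSpace X := by
  refine ⟨fun u _ => ?_⟩
  obtain ⟨i, hi⟩ : ∃ i, ∃ᶠ n in atTop, u n ∈ U i :=
    frequently_exists.1 (Frequently.of_forall fun n => mem_iUnion.1 (hU ▸ mem_univ (u n)))
  obtain ⟨a, -, φ, hφ, ha⟩ :=
    (isSeqCompact_iff_seqCompactSpace.2 (h i)).subseq_of_frequently_in hi
  exact ⟨a, mem_univ a, φ, hφ, ha⟩

theorem exists_isLocallyConstant_retraction [T2Space X] (hfin : (nonIsolatedPoints X).Finite)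
    (hne : (nonIsolatedPoints X).Nonempty) :
    ∃ r : X → nonIsolatedPoints X, IsLocallyConstant r ∧ ∀ c : nonIsolatedPoints X, r c = c := by
  classical
  obtain ⟨W, hW, hWdisj⟩ := hfin.t2_separation
  have : Nonempty (nonIsolatedPoints X) := hne.to_subtype
  -- Points outside every `W c` are isolated, so any value there keeps `r` locally constant.
  let r : X → nonIsolatedPoints X := fun x =>
    if h : ∃ c : nonIsolatedPoints X, x ∈ W c then h.choose else Classical.arbitrary _
  have hr : ∀ (c : nonIsolatedPoints X) (x : X), x ∈ W c → r x = c := by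
    intro c x hx
    have h : ∃ c : nonIsolatedPoints X, x ∈ W c := ⟨c, hx⟩
    simp only [r, dif_pos h]
    exact Subtype.ext (hWdisj.elim h.choose.2 c.2 (not_disjoint_iff.2 ⟨x, h.choose_spec, hx⟩))
  refine ⟨r, (IsLocallyConstant.iff_eventually_eq r).2 fun x => ?_, fun c => hr c c (hW c).1⟩
  by_cases hx : IsOpen ({x} : Set X)
  · rw [(isOpen_singleton_iff_nhds_eq_pure x).1 hx]
    exact eventually_pure.2 rfl
  · filter_upwards [(hW x).2.mem_nhds (hW x).1] with y hy
    rw [hr ⟨x, hx⟩ y hy, hr ⟨x, hx⟩ x (hW x).1]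

end NonIsolatedPoints

theorem onePointDiscreteTop_eq (D : Type) [TopologicalSpace D] [DiscreteTopology D] :
    OnePointDiscreteTop D = (inferInstance : TopologicalSpace (OnePoint D)) := by
  rw [OnePointDiscreteTop, DiscreteTopology.eq_bot (α := D)]

theorem exists_homeomorph_onePoint {Y : Type} [TopologicalSpace Y] [T2Space Y] {q : Y}
    (hcof : cofinite ≤ 𝓝 q) (hq : nonIsolatedPoints Y ⊆ {q}) :
    ∃ D : Type, Nonempty (@Homeomorph Y (OnePoint D) _ (OnePointDiscreteTop D)) := by
  have : CompactSpace Y := by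
    have hval : Tendsto ((↑) : ({q}ᶜ : Set Y) → Y) cofinite (𝓝 q) :=
      Subtype.val_injective.tendsto_cofinite.trans hcof
    have := hval.isCompact_insert_range_of_cofinite
    rw [Subtype.range_coe, insert_eq, union_compl_self] at this
    exact ⟨this⟩
  have : DiscreteTopology ({q}ᶜ : Set Y) :=
    (isDiscrete_of_disjoint_nonIsolatedPoints (disjoint_compl_left.mono_right hq)).to_subtype
  refine ⟨({q}ᶜ : Set Y), ⟨?_⟩⟩
  rw [onePointDiscreteTop_eq]
  exact (OnePoint.equivOfIsEmbeddingOfRangeEq q _ IsEmbedding.subtypeVal Subtype.range_coe).symm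

theorem nonIsolatedPoints_subset_of_homeomorph_onePoint {Y D : Type*} [TopologicalSpace Y]
    [TopologicalSpace D] [DiscreteTopology D] (e : Y ≃ₜ OnePoint D) :
    nonIsolatedPoints Y ⊆ {e.symm ∞} := by
  intro y hy
  rw [mem_singleton_iff, e.eq_symm_apply]
  induction hey : e y using OnePoint.rec with
  | infty => rfl
  | coe d =>
    refine absurd ?_ hy
    have hd : IsOpen ({(d : OnePoint D)} : Set (OnePoint D)) := by
      simpa using OnePoint.isOpen_image_coe.2 (isOpen_discrete {d})
    rw [← hey, ← image_singleton] at hd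
    exact e.isOpen_image.1 hd

theorem exists_homeomorph_onePoint_fiber {X : Type} [TopologicalSpace X] [T2Space X]
    [SeqCompactSpace X] {r : X → nonIsolatedPoints X} (hr : IsLocallyConstant r)
    (hrc : ∀ c : nonIsolatedPoints X, r c = c) (c : nonIsolatedPoints X) :
    ∃ D : Type, Nonempty (@Homeomorph (r ⁻¹' {c}) (OnePoint D) _ (OnePointDiscreteTop D)) := by
  have : SeqCompactSpace (r ⁻¹' {c}) :=
    isSeqCompact_iff_seqCompactSpace.1 (hr.isClosed_fiber c).isSeqCompact
  have hq : nonIsolatedPoints (r ⁻¹' {c}) ⊆ {⟨c, mem_singleton_iff.2 (hrc c)⟩} := by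
    rw [IsOpen.nonIsolatedPoints_subtype (hr {c})]
    rintro ⟨y, hy⟩ hyc
    have hry : r y = ⟨y, hyc⟩ := hrc ⟨y, hyc⟩
    rw [mem_singleton_iff, Subtype.mk.injEq, ← mem_singleton_iff.1 hy, hry]
  exact exists_homeomorph_onePoint (cofinite_le_nhds_of_seqCompactSpace hq) hq

theorem stmt_13 (X : Type) [TopologicalSpace X] [T2Space X] [Infinite X] :
    Boring X ↔ ∃ (n : ℕ) (U : Fin n → Set X),
      (∀ i, IsOpen (U i)) ∧ Pairwise (Function.onFun Disjoint U) ∧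
      (⋃ i, U i) = Set.univ ∧
      ∀ i, ∃ D : Type,
        Nonempty (@Homeomorph (↥(U i)) (OnePoint D) _ (OnePointDiscreteTop D)) := by
  rw [boring_iff]
  constructor
  · rintro ⟨hX, hfin⟩
    obtain ⟨r, hr, hrc⟩ := exists_isLocallyConstant_retraction hfin nonIsolatedPoints_nonempty
    have : Finite (nonIsolatedPoints X) := hfin.to_subtype
    let e := Finite.equivFin (nonIsolatedPoints X)
    refine ⟨_, fun i => r ⁻¹' {e.symm i}, fun i => hr _,
      fun i j hij => (disjoint_singleton.2 (e.symm.injective.ne hij)).preimage r,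
      iUnion_eq_univ_iff.2 fun x => ⟨e (r x), (e.symm_apply_apply (r x)).symm⟩,
      fun i => exists_homeomorph_onePoint_fiber hr hrc _⟩
  · rintro ⟨n, U, hUo, -, hUc, hU⟩
    choose D e using hU
    let _ (i : Fin n) : TopologicalSpace (D i) := ⊥
    have (i : Fin n) : DiscreteTopology (D i) := ⟨rfl⟩
    have e' (i : Fin n) : U i ≃ₜ OnePoint (D i) := (e i).some
    have hNI (i : Fin n) := nonIsolatedPoints_subset_of_homeomorph_onePoint (e' i)
    have (i : Fin n) : CompactSpace (U i) := (e' i).symm.compactSpace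
    refine ⟨seqCompactSpace_of_iUnion_eq_univ hUc fun i =>
      seqCompactSpace_of_cofinite_le_nhds (cofinite_le_nhds_of_compactSpace (hNI i)),
      (finite_range fun i => ((e' i).symm ∞ : X)).subset fun x hx => ?_⟩
    obtain ⟨i, hxi⟩ := mem_iUnion.1 (hUc ▸ mem_univ x)
    have hx' : (⟨x, hxi⟩ : U i) ∈ nonIsolatedPoints (U i) := by
      rwa [(hUo i).nonIsolatedPoints_subtype]
    exact ⟨i, congrArg Subtype.val (hNI i hx').symm⟩
end

section
/- Every boring Hausdorff space is compact, and a boring Hausdorff space is separable if and only if it is countable. -/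
open Set

section aux

variable {X : Type*} [TopologicalSpace X] [T2Space X]

/-- Any set disjoint from an open set containing the "limit set" F is finite. -/
lemma boring_key (hseq : SeqCompactSpace X) (F : Finset X)
    (hF : ∀ (x : ℕ → X) (l : X),
      Function.Injective x → Filter.Tendsto x Filter.atTop (nhds l) → l ∈ F)
    {S V : Set X} (hV : IsOpen V) (hFV : ↑F ⊆ V) (hSV : S ∩ V = ∅) : S.Finite := by
  by_contra hS
  replace hS : S.Infinite := hS
  set e := hS.natEmbedding
  set u : ℕ → X := fun n => (e n : X) with hu
  have huinj : Function.Injective u := fun a b hab => e.injective (Subtype.ext hab)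
  have huS : ∀ n, u n ∈ S := fun n => (e n).2
  obtain ⟨l, φ, hφ, hconv⟩ := SeqCompactSpace.tendsto_subseq u
  have hlF : l ∈ F := hF (u ∘ φ) l (huinj.comp hφ.injective) hconv
  have : ∀ᶠ n in Filter.atTop, (u ∘ φ) n ∈ V :=
    hconv (hV.mem_nhds (hFV hlF))
  obtain ⟨n, hn⟩ := this.exists
  have : u (φ n) ∈ S ∩ V := ⟨huS (φ n), hn⟩
  rw [hSV] at this
  exact this

lemma boring_isolated (hseq : SeqCompactSpace X) (F : Finset X)
    (hF : ∀ (x : ℕ → X) (l : X),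
      Function.Injective x → Filter.Tendsto x Filter.atTop (nhds l) → l ∈ F)
    {x : X} (hx : x ∉ F) : {x} ∈ nhds x := by
  obtain ⟨U, V, hU, hV, hxU, hFV, hUV⟩ :=
    SeparatedNhds.of_isCompact_isCompact (isCompact_singleton (x := x))
      F.finite_toSet.isCompact (by simpa using hx)
  have hUfin : U.Finite :=
    boring_key hseq F hF hV hFV (Set.disjoint_iff_inter_eq_empty.mp hUV)
  have hclosed : IsClosed (U \ {x}) := (hUfin.subset diff_subset).isClosed
  have : U ∩ (U \ {x})ᶜ ∈ nhds x := by
    apply Filter.inter_mem (hU.mem_nhds (hxU rfl))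
    exact hclosed.isOpen_compl.mem_nhds (by simp)
  refine Filter.mem_of_superset this fun y hy => ?_
  rcases hy with ⟨hyU, hyc⟩
  by_contra hyx
  exact hyc ⟨hyU, hyx⟩

end aux

theorem stmt_14 (X : Type*) [TopologicalSpace X] [T2Space X] (h : Boring X) :
    CompactSpace X ∧ (TopologicalSpace.SeparableSpace X ↔ Countable X) := by
  obtain ⟨hseq, F, hF⟩ := h
  constructor
  · -- compactness
    constructor
    rw [isCompact_iff_finite_subcover]
    intro ι U hU hcov
    have hpick : ∀ f : X, f ∈ F → ∃ i, f ∈ U i := fun f _ => by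
      simpa using hcov (mem_univ f)
    choose g hg using hpick
    set V : Set X := ⋃ f ∈ F.attach, U (g f.1 f.2) with hVdef
    have hVopen : IsOpen V := isOpen_biUnion fun f _ => hU _
    have hFV : ↑F ⊆ V := fun f hf => mem_biUnion (Finset.mem_attach F ⟨f, hf⟩) (hg f hf)
    have hSfin : (Vᶜ).Finite :=
      boring_key hseq F hF hVopen hFV (by simp)
    have hpick2 : ∀ y : X, y ∈ Vᶜ → ∃ i, y ∈ U i := fun y _ => by
      simpa using hcov (mem_univ y)
    choose g2 hg2 using hpick2
    classical
    refine ⟨F.attach.image (fun f => g f.1 f.2) ∪ hSfin.toFinset.attach.image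
      (fun y => g2 y.1 (hSfin.mem_toFinset.mp y.2)), fun x _ => ?_⟩
    by_cases hxV : x ∈ V
    · rw [hVdef, mem_iUnion₂] at hxV
      obtain ⟨f, hf, hxf⟩ := hxV
      refine mem_iUnion.mpr ⟨g f.1 f.2, mem_iUnion.mpr ⟨?_, hxf⟩⟩
      simp only [Finset.mem_union, Finset.mem_image, Finset.mem_attach]
      exact Or.inl ⟨f, trivial, rfl⟩
    · refine mem_iUnion.mpr ⟨g2 x hxV, mem_iUnion.mpr ⟨?_, hg2 x hxV⟩⟩
      simp only [Finset.mem_union, Finset.mem_image, Finset.mem_attach]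
      exact Or.inr ⟨⟨x, hSfin.mem_toFinset.mpr hxV⟩, trivial, rfl⟩
  · constructor
    · rintro ⟨D, hDc, hDdense⟩
      have hsub : (Set.univ : Set X) ⊆ D ∪ ↑F := by
        intro x _
        by_cases hxF : x ∈ F
        · exact Or.inr hxF
        · left
          have hiso := boring_isolated hseq F hF hxF
          have hx : x ∈ closure D := hDdense x
          rw [mem_closure_iff_nhds] at hx
          obtain ⟨y, hy1, hy2⟩ := hx {x} hiso
          rw [mem_singleton_iff] at hy1
          rwa [← hy1]
      have : (Set.univ : Set X).Countable :=
        Set.Countable.mono hsub (hDc.union F.countable_toSet)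
      exact Set.countable_univ_iff.mp this
    · intro hc
      exact ⟨⟨Set.univ, Set.countable_univ, dense_univ⟩⟩
end

section
/- If I is an ideal on ω containing no isomorphic copy of Fin⊗Fin (a weak P-ideal), then every boring Hausdorff space X is in FinBW(I): for every sequence (xₙ) in X there exists A ∉ I such that (xₙ)_{n∈A} converges in X. -/
open Set

lemma ideal_biUnion {I : Set (Set ℕ)} (hI : IsIdeal I) {β : Type*} (s : Finset β)
    (g : β → Set ℕ) (hg : ∀ b ∈ s, g b ∈ I) : (⋃ b ∈ s, g b) ∈ I := by
  classical
  induction s using Finset.induction with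
  | empty => simpa using hI.1 ∅ finite_empty
  | @insert a s ha ih =>
      rw [Finset.set_biUnion_insert]
      exact hI.2.2.1 _ _ (hg a (Finset.mem_insert_self a s))
        (ih fun b hb => hg b (Finset.mem_insert_of_mem hb))

lemma comb_lemma (I : Set (Set ℕ)) (hI : IsIdeal I)
    (hWP : ¬ ∃ f : ℕ → ℕ × ℕ, Function.Bijective f ∧ ∀ C ∈ FinFin, f ⁻¹' C ∈ I)
    (P : ℕ → Set ℕ)
    (hdisj : ∀ k k' m, m ∈ P k → m ∈ P k' → k = k')
    (hcov : ∀ m, ∃ k, m ∈ P k) (hPI : ∀ k, P k ∈ I) :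
    ∃ A, A ∉ I ∧ ∀ k, (A ∩ P k).Finite := by
  classical
  by_contra hcon
  push_neg at hcon
  -- hcon : ∀ A, A ∉ I → ∃ k, (A ∩ P k).Infinite ; better restate:
  have hsel : ∀ A : Set ℕ, (∀ k, (A ∩ P k).Finite) → A ∈ I := by
    intro A hA
    by_contra hAI
    obtain ⟨k, hk⟩ := hcon A hAI
    exact hk (hA k)
  -- index of a point
  set kOf : ℕ → ℕ := fun m => (hcov m).choose with hkOf
  have hkmem : ∀ m, m ∈ P (kOf m) := fun m => (hcov m).choose_spec
  have hkuniq : ∀ {m k}, m ∈ P k → kOf m = k := fun {m k} h => hdisj _ _ _ (hkmem m) h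
  set S : Set ℕ := {k | (P k).Infinite} with hS
  -- the union of all finite pieces is in I
  have hR : {m | kOf m ∉ S} ∈ I := by
    apply hsel
    intro k
    by_cases hk : k ∈ S
    · have : {m | kOf m ∉ S} ∩ P k = ∅ := by
        ext m; simp only [mem_inter_iff, mem_setOf_eq, mem_empty_iff_false, iff_false]
        rintro ⟨h1, h2⟩; exact h1 (hkuniq h2 ▸ hk)
      rw [this]; exact finite_empty
    · exact Finite.inter_of_right (not_infinite.mp hk) _
  -- S is infinite
  have hSinf : S.Infinite := by
    intro hSfin
    apply hI.2.2.2
    have : (univ : Set ℕ) ⊆ {m | kOf m ∉ S} ∪ ⋃ k ∈ hSfin.toFinset, P k := by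
      intro m _
      by_cases h : kOf m ∈ S
      · exact Or.inr (mem_biUnion (hSfin.mem_toFinset.mpr h) (hkmem m))
      · exact Or.inl h
    exact hI.2.1 _ _ (hI.2.2.1 _ _ hR (ideal_biUnion hI _ _ fun k _ => hPI k)) this
  set p : ℕ → Prop := fun k => k ∈ S with hp
  have hpinf : (setOf p).Infinite := hSinf
  -- column index function
  set Fc : ℕ → ℕ := fun m => if kOf m ∈ S then Nat.count p (kOf m) else 0 with hFc
  have hFcP : ∀ {m k}, m ∈ P k → Fc m = if k ∈ S then Nat.count p k else 0 := by
    intro m k h; rw [hFc]; simp only [hkuniq h]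
  -- fibers
  have hQsub : ∀ n, {m | Fc m = n} ⊆ P (Nat.nth p n) ∪ {m | kOf m ∉ S} := by
    intro n m hm
    by_cases h : kOf m ∈ S
    · left
      have hm' : (if kOf m ∈ S then Nat.count p (kOf m) else 0) = n := hm
      rw [if_pos h] at hm'
      have : Nat.count p (kOf m) = n := hm'
      have := congrArg (Nat.nth p) this
      rw [Nat.nth_count h] at this
      exact this ▸ hkmem m
    · exact Or.inr h
  have hQI : ∀ n, {m | Fc m = n} ∈ I :=
    fun n => hI.2.1 _ _ (hI.2.2.1 _ _ (hPI _) hR) (hQsub n)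
  have hQinf : ∀ n, {m | Fc m = n}.Infinite := by
    intro n
    have hnth : Nat.nth p n ∈ S := Nat.nth_mem_of_infinite hpinf n
    have hsub : P (Nat.nth p n) ⊆ {m | Fc m = n} := by
      intro m hm
      show Fc m = n
      rw [hFcP hm, if_pos hnth, Nat.count_nth_of_infinite hpinf]
    exact ((hnth : (P (Nat.nth p n)).Infinite).mono hsub)
  -- build the bijection
  have hequiv : ∀ n : ℕ, Nonempty ({m // Fc m = n} ≃ ℕ) := by
    intro n
    haveI : Infinite {m : ℕ // Fc m = n} := Set.infinite_coe_iff.mpr (hQinf n)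
    exact nonempty_equiv_of_countable
  let e : ℕ ≃ ℕ × ℕ :=
    (Equiv.sigmaFiberEquiv Fc).symm.trans
      ((Equiv.sigmaCongrRight fun n => Classical.choice (hequiv n)).trans
        (Equiv.sigmaEquivProd ℕ ℕ))
  have hefst : ∀ m, (e m).1 = Fc m := fun m => rfl
  apply hWP
  refine ⟨e, e.bijective, ?_⟩
  intro C hC
  -- B = bad columns
  have hB : {n : ℕ | ¬ ({j : ℕ | (n, j) ∈ C}).Finite}.Finite := hC
  set B := {n : ℕ | ¬ ({j : ℕ | (n, j) ∈ C}).Finite} with hBdef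
  have hsplit : (e : ℕ → ℕ × ℕ) ⁻¹' C ⊆
      (⋃ n ∈ hB.toFinset, {m | Fc m = n}) ∪ {m | e m ∈ C ∧ Fc m ∉ B} := by
    intro m hm
    by_cases h : Fc m ∈ B
    · exact Or.inl (mem_biUnion (hB.mem_toFinset.mpr h) rfl)
    · exact Or.inr ⟨hm, h⟩
  apply hI.2.1 _ _ _ hsplit
  apply hI.2.2.1 _ _ (ideal_biUnion hI _ _ fun n _ => hQI n)
  -- the good part is a selector-like set
  apply hsel
  intro k
  by_cases hkB : (if k ∈ S then Nat.count p k else 0) ∈ B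
  · have : {m | e m ∈ C ∧ Fc m ∉ B} ∩ P k = ∅ := by
      ext m
      simp only [mem_inter_iff, mem_setOf_eq, mem_empty_iff_false, iff_false, not_and]
      rintro ⟨_, h2⟩ h3
      exact h2 (hFcP h3 ▸ hkB)
    rw [this]; exact finite_empty
  · set n0 := if k ∈ S then Nat.count p k else 0 with hn0
    have hfin : ({n0} ×ˢ {j : ℕ | (n0, j) ∈ C}).Finite := by
      apply Finite.prod (finite_singleton n0)
      exact not_not.mp (fun h => hkB h)
    have hsub : {m | e m ∈ C ∧ Fc m ∉ B} ∩ P k ⊆ (e : ℕ → ℕ × ℕ) ⁻¹' ({n0} ×ˢ {j : ℕ | (n0, j) ∈ C}) := by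
      rintro m ⟨⟨h1, _⟩, h3⟩
      have hfst : (e m).1 = n0 := by rw [hefst, hFcP h3]
      constructor
      · exact hfst
      · show (n0, (e m).2) ∈ C
        rwa [← hfst, Prod.mk.eta]
    exact Finite.subset (hfin.preimage (e.injective.injOn)) hsub


section Topo
variable {X : Type*} [TopologicalSpace X] [T2Space X]

/-- Disjoint open neighborhoods around a finite set in a T2 space. -/
lemma exists_disjoint_opens (F : Finset X) :
    ∃ U : X → Set X, (∀ l ∈ F, IsOpen (U l) ∧ l ∈ U l) ∧
      ∀ l ∈ F, ∀ l' ∈ F, l ≠ l' → Disjoint (U l) (U l') := by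
  classical
  have h2 : ∀ a b : X, ∃ w : Set X × Set X, a ≠ b →
      IsOpen w.1 ∧ IsOpen w.2 ∧ a ∈ w.1 ∧ b ∈ w.2 ∧ Disjoint w.1 w.2 := by
    intro a b
    by_cases h : a ≠ b
    · obtain ⟨u, v, h1, h2', h3, h4, h5⟩ := t2_separation h
      exact ⟨(u, v), fun _ => ⟨h1, h2', h3, h4, h5⟩⟩
    · exact ⟨(univ, univ), fun h' => absurd h' h⟩
  choose w hw using h2
  refine ⟨fun l => ⋂ l' ∈ F.erase l, ((w l l').1 ∩ (w l' l).2), ?_, ?_⟩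
  · intro l hl
    constructor
    · refine isOpen_biInter_finset fun l' hl' => ?_
      have hne : l ≠ l' := fun h => (Finset.mem_erase.mp hl').1 h.symm
      exact ((hw l l' hne).1).inter ((hw l' l hne.symm).2.1)
    · refine mem_biInter fun l' hl' => ?_
      have hne : l ≠ l' := fun h => (Finset.mem_erase.mp hl').1 h.symm
      exact ⟨(hw l l' hne).2.2.1, (hw l' l hne.symm).2.2.2.1⟩
  · intro l hl l' hl' hne
    have hsub1 : (⋂ m ∈ F.erase l, ((w l m).1 ∩ (w m l).2)) ⊆ (w l l').1 := by
      intro c hc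
      exact (mem_iInter₂.mp hc l' (Finset.mem_erase.mpr ⟨hne.symm, hl'⟩)).1
    have hsub2 : (⋂ m ∈ F.erase l', ((w l' m).1 ∩ (w m l').2)) ⊆ (w l l').2 := by
      intro c hc
      exact (mem_iInter₂.mp hc l (Finset.mem_erase.mpr ⟨hne, hl⟩)).2
    exact Disjoint.mono hsub1 hsub2 (hw l l' hne).2.2.2.2

omit [T2Space X] in
lemma finite_of_avoids (hseq : SeqCompactSpace X) (F : Finset X)
    (hF : ∀ (x : ℕ → X) (l : X), Function.Injective x →
      Filter.Tendsto x Filter.atTop (nhds l) → l ∈ F)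
    (S : Set X) (hW : ∀ l ∈ F, ∃ W : Set X, IsOpen W ∧ l ∈ W ∧ S ∩ W = ∅) :
    S.Finite := by
  by_contra hSfin
  have hSinf : S.Infinite := hSfin
  let emb := hSinf.natEmbedding
  obtain ⟨l, φ, hφ, hconv⟩ := SeqCompactSpace.tendsto_subseq (fun n => (emb n : X))
  have hinj : Function.Injective ((fun n => (emb n : X)) ∘ φ) :=
    (Subtype.val_injective.comp emb.injective).comp hφ.injective
  have hlF : l ∈ F := hF _ l hinj hconv
  obtain ⟨W, hWopen, hlW, hSW⟩ := hW l hlF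
  have hev : ∀ᶠ n in Filter.atTop, ((fun n => (emb n : X)) ∘ φ) n ∈ W :=
    hconv (hWopen.mem_nhds hlW)
  obtain ⟨n, hn⟩ := hev.exists
  exact (eq_empty_iff_forall_notMem.mp hSW) _ ⟨(emb (φ n)).2, hn⟩

end Topo

theorem stmt_15 (I : Set (Set ℕ)) (hI : IsIdeal I)
    (hWP : ¬ ∃ f : ℕ → ℕ × ℕ, Function.Bijective f ∧ ∀ C ∈ FinFin, f ⁻¹' C ∈ I)
    (X : Type*) [TopologicalSpace X] [T2Space X] (hX : Boring X) :
    FinBW I X := by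
  classical
  obtain ⟨hseq, F, hF⟩ := hX
  intro x
  by_cases hfib : ∃ c : X, x ⁻¹' {c} ∉ I
  · obtain ⟨c, hc⟩ := hfib
    refine ⟨x ⁻¹' {c}, hc, c, fun U hU => ?_⟩
    have : {n ∈ x ⁻¹' {c} | x n ∉ U} = ∅ :=
      eq_empty_iff_forall_notMem.mpr fun n hn =>
        hn.2 (by rw [show x n = c from hn.1]; exact mem_of_mem_nhds hU)
    rw [this]; exact finite_empty
  push_neg at hfib
  -- disjoint open neighborhoods of F
  obtain ⟨U, hUo, hUd⟩ := exists_disjoint_opens F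
  -- points avoiding all the U l form a finite set
  have h0fin : {c : X | ∀ l ∈ F, c ∉ U l}.Finite := by
    refine finite_of_avoids hseq F hF _ fun l hl => ⟨U l, (hUo l hl).1, (hUo l hl).2, ?_⟩
    ext c
    simp only [mem_inter_iff, mem_setOf_eq, mem_empty_iff_false, iff_false, not_and]
    intro h; exact h l hl
  -- neighborhoods of l ∈ F are cofinite in U l
  have h2 : ∀ l ∈ F, ∀ V : Set X, IsOpen V → l ∈ V → (U l \ V).Finite := by
    intro l hl V hV hlV
    refine finite_of_avoids hseq F hF _ fun l' hl' => ?_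
    by_cases h : l' = l
    · subst h
      exact ⟨V, hV, hlV, by ext c; simp only [mem_inter_iff, mem_diff,
        mem_empty_iff_false, iff_false, not_and]; tauto⟩
    · refine ⟨U l', (hUo l' hl').1, (hUo l' hl').2, ?_⟩
      have hd := hUd l hl l' hl' (fun he => h he.symm)
      ext c
      simp only [mem_inter_iff, mem_diff, mem_empty_iff_false, iff_false, not_and]
      intro hc hc'
      exact Set.disjoint_left.mp hd hc.1 hc'
  -- partition of ℕ into fibers of x
  set P : ℕ → Set ℕ := fun k => {n | x n = x k ∧ ∀ j < k, x j ≠ x k} with hP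
  have hdisj : ∀ k k' m, m ∈ P k → m ∈ P k' → k = k' := by
    intro k k' m hm hm'
    rcases Nat.lt_trichotomy k k' with h | h | h
    · exact absurd (hm.1.symm.trans hm'.1) (hm'.2 k h)
    · exact h
    · exact absurd (hm'.1.symm.trans hm.1) (hm.2 k' h)
  have hcov : ∀ m, ∃ k, m ∈ P k := by
    intro m
    have hex : ∃ k, x k = x m := ⟨m, rfl⟩
    refine ⟨Nat.find hex, ?_, ?_⟩
    · exact (Nat.find_spec hex).symm
    · intro j hj hxj
      exact Nat.find_min hex hj (hxj.trans (Nat.find_spec hex))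
  have hPI : ∀ k, P k ∈ I := by
    intro k
    exact hI.2.1 _ _ (hfib (x k)) fun n hn => hn.1
  obtain ⟨A, hA, hAfin⟩ := comb_lemma I hI hWP P hdisj hcov hPI
  -- A meets every fiber of x finitely
  have hfibA : ∀ c : X, (A ∩ x ⁻¹' {c}).Finite := by
    intro c
    by_cases h : ∃ n, x n = c
    · have heq : x ⁻¹' {c} = P (Nat.find h) := by
        ext n
        simp only [mem_preimage, mem_singleton_iff, hP, mem_setOf_eq]
        constructor
        · intro hn
          refine ⟨hn.trans (Nat.find_spec h).symm, fun j hj hxj => ?_⟩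
          exact Nat.find_min h hj (hxj.trans (Nat.find_spec h))
        · intro hn
          exact hn.1.trans (Nat.find_spec h)
      rw [heq]; exact hAfin _
    · have : x ⁻¹' {c} = ∅ := by
        ext n; simp only [mem_preimage, mem_singleton_iff, mem_empty_iff_false, iff_false]
        exact fun hn => h ⟨n, hn⟩
      rw [this, inter_empty]; exact finite_empty
  -- split A by regions
  have hS0fin : {n ∈ A | ∀ l ∈ F, x n ∉ U l}.Finite := by
    have hsub : {n ∈ A | ∀ l ∈ F, x n ∉ U l} ⊆
        ⋃ c ∈ {c : X | ∀ l ∈ F, c ∉ U l}, (A ∩ x ⁻¹' {c}) := by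
      intro n hn
      exact mem_biUnion hn.2 ⟨hn.1, rfl⟩
    exact Finite.subset (Finite.biUnion h0fin fun c _ => hfibA c) hsub
  have hex : ∃ l ∈ F, {n ∈ A | x n ∈ U l} ∉ I := by
    by_contra hcon
    push_neg at hcon
    apply hA
    have hsub : A ⊆ {n ∈ A | ∀ l ∈ F, x n ∉ U l} ∪ ⋃ l ∈ F, {n ∈ A | x n ∈ U l} := by
      intro n hn
      by_cases h : ∀ l ∈ F, x n ∉ U l
      · exact Or.inl ⟨hn, h⟩
      · push_neg at h
        obtain ⟨l, hl, hnl⟩ := h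
        exact Or.inr (mem_biUnion hl ⟨hn, hnl⟩)
    exact hI.2.1 _ _ (hI.2.2.1 _ _ (hI.1 _ hS0fin) (ideal_biUnion hI F _ hcon)) hsub
  obtain ⟨l, hl, hAl⟩ := hex
  refine ⟨{n ∈ A | x n ∈ U l}, hAl, l, fun V hV => ?_⟩
  obtain ⟨V', hV'sub, hV'open, hlV'⟩ := mem_nhds_iff.mp hV
  have hsub : {n ∈ {n ∈ A | x n ∈ U l} | x n ∉ V} ⊆
      ⋃ c ∈ U l \ V', (A ∩ x ⁻¹' {c}) := by
    rintro n ⟨⟨hnA, hnU⟩, hnV⟩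
    exact mem_biUnion ⟨hnU, fun h => hnV (hV'sub h)⟩ ⟨hnA, rfl⟩
  exact Finite.subset (Finite.biUnion (h2 l hl V' hV'open hlV') fun c _ => hfibA c) hsub
end

section
/- If I is a boring ideal on ω (I contains an isomorphic copy of BI), then every Hausdorff space in FinBW(I) is boring. -/
open Set

open Set Filter Topology Function

/-!
Sequential compactness is immediate, since `I`-positive sets are infinite. If infinitely many
points were limits of injective sequences, we could pick distinct `Lᵢ` and injective sequences
`zᵢ → Lᵢ` with pairwise disjoint ranges, and look at `w (i, n, m) = zᵢ n` on `ω³`. If `w`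
converges to `l` along `C`, an infinite fibre of `C` over `(i, n)` forces `zᵢ n = l`, so every
section of `C` is in `Fin ⊗ Fin`; an infinite section with finite fibres makes `(n, m) ↦ n`
finite-to-one on it, forcing `l = Lᵢ`. As `l` equals at most one `Lᵢ` and lies in at most one
range, only finitely many sections are infinite, i.e. `C ∈ BI`. Pulling `w` back along the
bijection `ω → ω³` then contradicts `FinBW(I)`.
-/

theorem convAlong_iff_tendsto {X : Type*} [TopologicalSpace X] {A : Set ℕ} {x : ℕ → X}
    {l : X} :
    ConvAlong A x l ↔ Tendsto x (cofinite ⊓ 𝓟 A) (𝓝 l) := by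
  simp only [ConvAlong, tendsto_def, mem_inf_principal, mem_cofinite, compl_ofPred,
    Classical.not_imp, mem_preimage]

theorem Filter.Tendsto.comp_injective_inf_principal {α β γ : Type*} {w : β → γ} {C : Set β}
    {F : Filter γ} (hw : Tendsto w (cofinite ⊓ 𝓟 C) F) {g : α → β} (hg : Injective g) :
    Tendsto (w ∘ g) (cofinite ⊓ 𝓟 (g ⁻¹' C)) F :=
  hw.comp (tendsto_inf.2 ⟨hg.tendsto_cofinite.mono_left inf_le_left,
    tendsto_principal.2 (mem_inf_of_right (mem_principal_self _))⟩)

theorem tendsto_fst_cofinite_inf_principal {α β : Type*} {D : Set (α × β)}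
    (hD : ∀ a, {b | (a, b) ∈ D}.Finite) : Tendsto Prod.fst (cofinite ⊓ 𝓟 D) cofinite := by
  intro t ht
  rw [mem_cofinite] at ht
  rw [mem_map, mem_inf_principal, mem_cofinite]
  refine (ht.biUnion fun a _ => (finite_singleton a).prod (hD a)).subset ?_
  rintro ⟨a, b⟩ hab
  simp only [mem_compl_iff, mem_ofPred_eq, Classical.not_imp] at hab
  exact mem_biUnion hab.2 ⟨rfl, hab.1⟩

theorem FinBW.seqCompactSpace {X : Type*} [TopologicalSpace X] {I : Set (Set ℕ)}
    (hI : ∀ A : Set ℕ, A.Finite → A ∈ I) (hX : FinBW I X) : SeqCompactSpace X := by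
  refine ⟨fun x _ => ?_⟩
  obtain ⟨A, hAI, l, hA⟩ := hX x
  have hAinf : A.Infinite := fun hfin => hAI (hI A hfin)
  have hA_nth : Nat.nth (· ∈ A) ⁻¹' A = univ :=
    eq_univ_of_forall (Nat.nth_mem_of_infinite hAinf)
  refine ⟨l, mem_univ l, Nat.nth (· ∈ A), Nat.nth_strictMono hAinf, ?_⟩
  have := (convAlong_iff_tendsto.1 hA).comp_injective_inf_principal
    (Nat.nth_injective (p := (· ∈ A)) hAinf)
  rwa [hA_nth, principal_univ, inf_top_eq, Nat.cofinite_eq_atTop] at this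

section T2

variable {X : Type*} [TopologicalSpace X] [T2Space X]

theorem finite_range_inter_range_of_tendsto {α β : Type*} {y : α → X} {z : β → X} {a b : X}
    (hy : Tendsto y cofinite (𝓝 a)) (hz : Tendsto z cofinite (𝓝 b)) (hab : a ≠ b) :
    (range y ∩ range z).Finite := by
  obtain ⟨U, V, hU, hV, haU, hbV, hUV⟩ := t2_separation hab
  have hyU : {n | y n ∉ U}.Finite := hy (hU.mem_nhds haU)
  have hzV : {m | z m ∉ V}.Finite := hz (hV.mem_nhds hbV)
  refine ((hyU.image y).union (hzV.image z)).subset ?_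
  rintro _ ⟨⟨n, rfl⟩, ⟨m, hm⟩⟩
  by_cases hn : y n ∈ U
  · exact Or.inr ⟨m, fun hmV => disjoint_left.1 hUV hn (hm ▸ hmV), hm⟩
  · exact Or.inl ⟨n, hn, rfl⟩

theorem eventually_notMem_range_of_tendsto {α β : Type*} {y : α → X} {z : β → X} {a b : X}
    (hy_inj : Injective y) (hy : Tendsto y cofinite (𝓝 a)) (hz : Tendsto z cofinite (𝓝 b))
    (hab : a ≠ b) : ∀ᶠ n in cofinite, y n ∉ range z :=
  ((finite_range_inter_range_of_tendsto hy hz hab).preimage hy_inj.injOn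
    ).eventually_cofinite_notMem.mono fun n hn hnz => hn ⟨mem_range_self n, hnz⟩

/- `zᵢ` is `yᵢ` shifted past its finitely many values in the ranges of `y₀, …, yᵢ₋₁`. -/
theorem exists_disjoint_ranges_of_tendsto {L : ℕ → X} (hL : Injective L) {y : ℕ → ℕ → X}
    (hy : ∀ i, Injective (y i)) (hyL : ∀ i, Tendsto (y i) atTop (𝓝 (L i))) :
    ∃ z : ℕ → ℕ → X, (∀ i, Injective (z i)) ∧ (∀ i, Tendsto (z i) atTop (𝓝 (L i))) ∧
      Pairwise (Disjoint on fun i => range (z i)) := by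
  rw [← Nat.cofinite_eq_atTop] at hyL
  have hev : ∀ i, ∀ᶠ n in atTop, ∀ j < i, y i n ∉ range (y j) := fun i =>
    Nat.cofinite_eq_atTop ▸ (eventually_all_finite (finite_lt_nat i)).2 fun j hj =>
      eventually_notMem_range_of_tendsto (hy i) (hyL i) (hyL j) (hL.ne (ne_of_gt hj))
  choose N hN using fun i => eventually_atTop.1 (hev i)
  refine ⟨fun i n => y i (n + N i), fun i => (hy i).comp (add_left_injective _),
    fun i => (tendsto_add_atTop_iff_nat _).2 (Nat.cofinite_eq_atTop ▸ hyL i),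
    (pairwise_disjoint_on _).2 fun j i hji => disjoint_left.2 ?_⟩
  rintro _ ⟨m, rfl⟩ ⟨n, hn⟩
  exact hN i (n + N i) (Nat.le_add_left _ _) j hji ⟨m + N j, hn.symm⟩

theorem exists_disjoint_convergent_seqs_of_not_boring
    (h : ¬ ∃ F : Finset X, ∀ (x : ℕ → X) (l : X),
      Injective x → Tendsto x atTop (𝓝 l) → l ∈ F) :
    ∃ (L : ℕ → X) (z : ℕ → ℕ → X), Injective L ∧ (∀ i, Injective (z i)) ∧
      (∀ i, Tendsto (z i) atTop (𝓝 (L i))) ∧ Pairwise (Disjoint on fun i => range (z i)) := by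
  set S := {l : X | ∃ x : ℕ → X, Injective x ∧ Tendsto x atTop (𝓝 l)}
  have hS : S.Infinite := fun hS =>
    h ⟨hS.toFinset, fun x l hx hl => hS.mem_toFinset.2 ⟨x, hx, hl⟩⟩
  have hL : Injective fun i => (hS.natEmbedding S i : X) :=
    Subtype.val_injective.comp (hS.natEmbedding S).injective
  choose y hy hyL using fun i => (hS.natEmbedding S i).2
  obtain ⟨z, hz⟩ := exists_disjoint_ranges_of_tendsto hL hy hyL
  exact ⟨_, z, hL, hz⟩

theorem eq_of_tendsto_comp_fst {α β : Type*} {y : α → X} {D : Set (α × β)} {l : X}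
    (hD : Tendsto (y ∘ Prod.fst) (cofinite ⊓ 𝓟 D) (𝓝 l)) {a : α}
    (ha : {b | (a, b) ∈ D}.Infinite) : y a = l :=
  have : (cofinite ⊓ 𝓟 (Prod.mk a ⁻¹' D)).NeBot := ha.cofinite_inf_principal_neBot
  tendsto_nhds_unique tendsto_const_nhds
    (hD.comp_injective_inf_principal (Prod.mk_right_injective a))

theorem mem_finFin_of_tendsto_comp_fst {y : ℕ → X} (hy : Injective y) {D : Set (ℕ × ℕ)}
    {l : X} (hD : Tendsto (y ∘ Prod.fst) (cofinite ⊓ 𝓟 D) (𝓝 l)) : D ∈ FinFin :=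
  ((finite_singleton l).preimage hy.injOn).subset fun _ ha => eq_of_tendsto_comp_fst hD ha

theorem finite_of_tendsto_comp_fst {α β : Type*} {y : α → X} {c l : X}
    (hy : Tendsto y cofinite (𝓝 c)) {D : Set (α × β)}
    (hD : Tendsto (y ∘ Prod.fst) (cofinite ⊓ 𝓟 D) (𝓝 l)) (hcl : c ≠ l) (hl : l ∉ range y) :
    D.Finite := by
  by_contra hinf
  have hfib : ∀ a, {b | (a, b) ∈ D}.Finite := fun a =>
    by_contra fun ha => hl ⟨a, eq_of_tendsto_comp_fst hD ha⟩
  have := Set.Infinite.cofinite_inf_principal_neBot hinf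
  exact hcl (tendsto_nhds_unique (hy.comp (tendsto_fst_cofinite_inf_principal hfib)) hD)

theorem mem_BI_of_tendsto {L : ℕ → X} {z : ℕ → ℕ → X} (hL : Injective L)
    (hz : ∀ i, Injective (z i)) (hzL : ∀ i, Tendsto (z i) atTop (𝓝 (L i)))
    (hdisj : Pairwise (Disjoint on fun i => range (z i))) {C : Set (ℕ × ℕ × ℕ)} {l : X}
    (hC : Tendsto (fun p => z p.1 p.2.1) (cofinite ⊓ 𝓟 C) (𝓝 l)) : C ∈ BI := by
  have hsec : ∀ i, Tendsto (z i ∘ Prod.fst) (cofinite ⊓ 𝓟 (BIsec i C)) (𝓝 l) := fun i =>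
    hC.comp_injective_inf_principal (Prod.mk_right_injective i)
  have hexc : ({i | L i = l} ∪ {i | l ∈ range (z i)}).Finite :=
    (Subsingleton.finite fun i hi j hj => hL (hi.trans hj.symm)).union
      (Subsingleton.finite fun i hi j hj =>
        by_contra fun hij => disjoint_left.1 (hdisj hij) hi hj)
  obtain ⟨k, hk⟩ := hexc.bddAbove
  refine ⟨k + 1, fun i _ => mem_finFin_of_tendsto_comp_fst (hz i) (hsec i), fun i hi => ?_⟩
  have hi_good : i ∉ {i | L i = l} ∪ {i | l ∈ range (z i)} := fun hexc_i => by
    have := hk hexc_i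
    omega
  simp only [mem_union, mem_ofPred_eq, not_or] at hi_good
  exact finite_of_tendsto_comp_fst (Nat.cofinite_eq_atTop ▸ hzL i) (hsec i)
    hi_good.1 hi_good.2

end T2

theorem stmt_17 (I : Set (Set ℕ)) (hI : IsIdeal I)
    (hbor : ∃ f : ℕ → ℕ × ℕ × ℕ, Function.Bijective f ∧ ∀ A ∈ BI, f ⁻¹' A ∈ I)
    (X : Type*) [TopologicalSpace X] [T2Space X] (hX : FinBW I X) :
    Boring X := by
  obtain ⟨f, hf, hfI⟩ := hbor
  refine ⟨hX.seqCompactSpace hI.1, by_contra fun hlim => ?_⟩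
  obtain ⟨L, z, hL, hz, hzL, hdisj⟩ := exists_disjoint_convergent_seqs_of_not_boring hlim
  set w : ℕ × ℕ × ℕ → X := fun p => z p.1 p.2.1
  set e := Equiv.ofBijective f hf
  obtain ⟨B, hBI, l, hB⟩ := hX (w ∘ e)
  have hwB : Tendsto w (cofinite ⊓ 𝓟 (e '' B)) (𝓝 l) := by
    simpa only [comp_assoc, e.self_comp_symm, comp_id, ← e.image_eq_preimage_symm] using
      (convAlong_iff_tendsto.1 hB).comp_injective_inf_principal e.symm.injective
  have hpre := hfI _ (mem_BI_of_tendsto hL hz hzL hdisj hwB)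
  exact hBI (by rwa [← e.preimage_image B])
end
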